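/- arXiv:math/0112069 — 7 statements merged into one kernel-verified Lean document; each statement's English description precedes it below -/
import Mathlib

section
/- Let M be a family of weak compositions of an n-element set S into p parts (ordered p-tuples (A_1,…,A_p) of pairwise disjoint sets whose union is S), such that for each k ∈ {1,…,p} the family M_k = {A_k : A ∈ M} is an antichain. Then the sum over A ∈ M of 1/multinomial(n; |A_1|,…,|A_p|) is at most 1. -/
/-!
Induct on the number of parts. Grouping the compositions in `M` by their first part `B`, the
multinomial factors as `multinomial(n; |B|, rest) = choose n |B| * multinomial(n - |B|; rest)`, and
the tails of one group are weak compositions of `S \ B` satisfying the same antichain condition.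
By induction each group therefore contributes at most `1 / choose n |B|`, and the first parts form
an antichain of subsets of `S`, so the LYM inequality bounds the total by `1`.
-/

open Finset

theorem Nat.multinomial_univ_fin_succ {p : ℕ} (f : Fin (p + 1) → ℕ) :
    Nat.multinomial univ f = (∑ i, f i).choose (f 0) * Nat.multinomial univ (Fin.tail f) := by
  conv_lhs => rw [Fin.univ_succ, Nat.multinomial_cons]
  simp [Nat.multinomial, sum_map, prod_map, Fin.tail, Fin.sum_univ_succ]

section

variable {α : Type*} [DecidableEq α]

theorem IsAntichain.sum_inv_choose_card_le_one {𝕜 : Type*} [Semifield 𝕜] [LinearOrder 𝕜]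
    [IsStrictOrderedRing 𝕜] {S : Finset α} {𝒜 : Finset (Finset α)}
    (h𝒜 : IsAntichain (· ⊆ ·) (𝒜 : Set (Finset α))) (h𝒜S : ∀ B ∈ 𝒜, B ⊆ S) :
    ∑ B ∈ 𝒜, ((#S).choose #B : 𝕜)⁻¹ ≤ 1 := by
  have hinj : Set.InjOn (map (.subtype (· ∈ S))) (map (.subtype (· ∈ S)) ⁻¹' 𝒜) :=
    (map_injective _).injOn
  rw [← sum_preimage _ 𝒜 hinj]
  · have h𝒜' := h𝒜.preimage (f := map (.subtype (· ∈ S))) (map_injective _)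
      fun _ _ => map_subset_map.2
    rw [← coe_preimage _ hinj] at h𝒜'
    simpa using lubell_yamamoto_meshalkin_inequality_sum_inv_choose (𝕜 := 𝕜) h𝒜'
  · exact fun B hB hBS => absurd ⟨_, subtype_map_of_mem (h𝒜S B hB)⟩ hBS

def IsWeakComposition {ι : Type*} [Fintype ι] (S : Finset α) (A : ι → Finset α) : Prop :=
  Pairwise (fun i j => Disjoint (A i) (A j)) ∧ univ.biUnion A = S

namespace IsWeakComposition

variable {ι : Type*} [Fintype ι] {S : Finset α} {A : ι → Finset α}

theorem subset (hA : IsWeakComposition S A) (i : ι) : A i ⊆ S :=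
  hA.2 ▸ subset_biUnion_of_mem A (mem_univ i)

theorem sum_card (hA : IsWeakComposition S A) : ∑ i, #(A i) = #S := by
  rw [← hA.2, card_biUnion fun i _ j _ hij => hA.1 hij]

theorem tail {p : ℕ} {A : Fin (p + 1) → Finset α} (hA : IsWeakComposition S A) :
    IsWeakComposition (S \ A 0) (Fin.tail A) := by
  refine ⟨fun i j hij => hA.1 (Fin.succ_injective _ |>.ne hij), ?_⟩
  ext x
  rw [← hA.2]
  simp only [mem_biUnion, mem_univ, true_and, mem_sdiff, Fin.tail, Fin.exists_fin_succ]
  constructor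
  · rintro ⟨i, hx⟩
    exact ⟨Or.inr ⟨i, hx⟩, disjoint_left.1 (hA.1 (Fin.succ_ne_zero i)) hx⟩
  · rintro ⟨hx | hx, hx0⟩
    · exact absurd hx hx0
    · exact hx

theorem multinomial_eq {p : ℕ} {A : Fin (p + 1) → Finset α} (hA : IsWeakComposition S A) :
    Nat.multinomial univ (fun i => #(A i)) =
      (#S).choose #(A 0) * Nat.multinomial univ (fun i => #(Fin.tail A i)) := by
  rw [Nat.multinomial_univ_fin_succ, hA.sum_card]
  rfl

end IsWeakComposition

theorem sum_inv_multinomial_filter_eq {𝕜 : Type*} [Semifield 𝕜] {p : ℕ} {S B : Finset α}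
    {M : Finset (Fin (p + 1) → Finset α)} (hM : ∀ A ∈ M, IsWeakComposition S A) :
    ∑ A ∈ M with A 0 = B, (Nat.multinomial univ (fun i => #(A i)) : 𝕜)⁻¹ =
      ((#S).choose #B : 𝕜)⁻¹ *
        ∑ A ∈ {A ∈ M | A 0 = B}.image Fin.tail, (Nat.multinomial univ (fun i => #(A i)) : 𝕜)⁻¹ := by
  have htail : Set.InjOn Fin.tail (M.filter (· 0 = B) : Set (Fin (p + 1) → Finset α)) := by
    intro A hA A' hA' h
    simp only [mem_coe, mem_filter] at hA hA'
    rw [← Fin.cons_self_tail A, ← Fin.cons_self_tail A', hA.2, hA'.2, h]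
  rw [sum_image htail, mul_sum]
  refine sum_congr rfl fun A hA => ?_
  obtain ⟨hAM, rfl⟩ := mem_filter.1 hA
  rw [(hM A hAM).multinomial_eq, Nat.cast_mul, mul_inv]

theorem sum_inv_multinomial_le_one {𝕜 : Type*} [Semifield 𝕜] [LinearOrder 𝕜]
    [IsStrictOrderedRing 𝕜] {p : ℕ} {S : Finset α} {M : Finset (Fin p → Finset α)}
    (hM : ∀ A ∈ M, IsWeakComposition S A)
    (hanti : ∀ k, IsAntichain (· ⊆ ·) ((· k) '' (M : Set (Fin p → Finset α)))) :
    ∑ A ∈ M, (Nat.multinomial univ (fun i => #(A i)) : 𝕜)⁻¹ ≤ 1 := by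
  induction p generalizing S with
  | zero =>
    calc _ = ∑ A ∈ M, (1 : 𝕜) := sum_congr rfl fun A _ => by simp
      _ ≤ 1 := by simpa using card_le_one_of_subsingleton M
  | succ p ih =>
    calc _ = ∑ B ∈ M.image (· 0), ∑ A ∈ M with A 0 = B,
          (Nat.multinomial univ (fun i => #(A i)) : 𝕜)⁻¹ :=
          (sum_fiberwise_of_maps_to (fun A hA => mem_image_of_mem _ hA) _).symm
      _ ≤ ∑ B ∈ M.image (· 0), ((#S).choose #B : 𝕜)⁻¹ := by
        refine sum_le_sum fun B _ => ?_
        rw [sum_inv_multinomial_filter_eq hM]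
        refine mul_le_of_le_one_right (by positivity) (ih (S := S \ B) ?_ fun k => ?_)
        · simp only [mem_image, mem_filter]
          rintro _ ⟨A, ⟨hAM, rfl⟩, rfl⟩
          exact (hM A hAM).tail
        · refine (hanti k.succ).subset ?_
          simp only [coe_image, coe_filter]
          rintro _ ⟨_, ⟨A, ⟨hAM, -⟩, rfl⟩, rfl⟩
          exact ⟨A, hAM, rfl⟩
      _ ≤ 1 := by
        refine IsAntichain.sum_inv_choose_card_le_one (by simpa using hanti 0) ?_
        simp only [mem_image]
        rintro _ ⟨A, hAM, rfl⟩
        exact (hM A hAM).subset 0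

end

theorem meshalkin_lym_general {α : Type*} [DecidableEq α] (p : ℕ) (S : Finset α)
    (M : Finset (Fin p → Finset α))
    (hcomp : ∀ A ∈ M, (∀ i j : Fin p, i ≠ j → Disjoint (A i) (A j)) ∧
      Finset.univ.biUnion A = S)
    (hanti : ∀ k : Fin p,
      IsAntichain (· ⊆ ·) {B : Finset α | ∃ A ∈ M, A k = B}) :
    ∑ A ∈ M, (1 : ℚ) / (Nat.multinomial Finset.univ (fun i => (A i).card)) ≤ 1 := by
  simpa only [one_div] using sum_inv_multinomial_le_one (S := S) (fun A hA => hcomp A hA) hanti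

/-- Hochberg–Hirsch LYM inequality for Meshalkin's theorem: if `M` is a family of weak
compositions of an `n`-set `S` into `p` parts and each `M_k` is an antichain, then
`∑_{A ∈ M} 1 / multinomial(n; |A_1|, …, |A_p|) ≤ 1`. -/
theorem meshalkin_lym {α : Type*} [DecidableEq α] (n p : ℕ) (S : Finset α)
    (hS : S.card = n) (M : Finset (Fin p → Finset α))
    (hcomp : ∀ A ∈ M, (∀ i j : Fin p, i ≠ j → Disjoint (A i) (A j)) ∧
      Finset.univ.biUnion A = S)
    (hanti : ∀ k : Fin p,
      IsAntichain (· ⊆ ·) {B : Finset α | ∃ A ∈ M, A k = B}) :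
    ∑ A ∈ M, (1 : ℚ) / (Nat.multinomial Finset.univ (fun i => (A i).card)) ≤ 1 :=
  meshalkin_lym_general p S M hcomp hanti
end

section
/- Let M be a family of weak compositions of an n-element set S into p parts such that each family M_k = {A_k : A ∈ M} is an antichain. Then |M| ≤ max over (α_1,…,α_p) with α_1+⋯+α_p = n of multinomial(n; α_1,…,α_p). -/
/-!
Lubell's permutation argument. Concatenating orderings of the parts of a weak composition `A`
gives `∏ₖ |Aₖ|!` permutations of `S`. Two such concatenations can only coincide for the same
composition and the same orderings: their first blocks are prefixes of one list, so one part
contains the other, and the antichain condition forces equality; then induct on the remaining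
blocks. Hence `∑_{A ∈ M} ∏ₖ |Aₖ|! ≤ n!`, i.e. `∑_{A ∈ M} 1 / multinomial(n; |A₁|, …, |Aₚ|) ≤ 1`.
-/

open Finset Nat

namespace List

variable {α : Type*}

theorem nodup_flatten_ofFn {p : ℕ} {f : Fin p → List α} (hnd : ∀ k, (f k).Nodup)
    (hdisj : _root_.Pairwise fun i j => (f i).Disjoint (f j)) : (ofFn f).flatten.Nodup :=
  nodup_flatten.2 ⟨by simpa [mem_ofFn] using hnd, pairwise_ofFn.2 fun _ _ hij => hdisj hij.ne⟩

variable [DecidableEq α]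

theorem append_inj_of_toFinset_comparable {x y l l' : List α} (h : x ++ l = y ++ l')
    (hnd : (x ++ l).Nodup)
    (hxy : x.toFinset ⊆ y.toFinset ∨ y.toFinset ⊆ x.toFinset → x.toFinset = y.toFinset) :
    x = y ∧ l = l' := by
  have hpre : x <+: y ∨ y <+: x :=
    prefix_or_prefix_of_prefix (prefix_append x l) (h ▸ prefix_append y l')
  have hfin : x.toFinset = y.toFinset :=
    hxy (hpre.imp (fun h => Multiset.toFinset_subset.2 h.subset)
      (fun h => Multiset.toFinset_subset.2 h.subset))
  have hlen : x.length = y.length := by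
    rw [← toFinset_card_of_nodup hnd.of_append_left,
      ← toFinset_card_of_nodup (h ▸ hnd).of_append_left, hfin]
  exact append_inj h hlen

theorem eq_of_flatten_ofFn_eq : ∀ {p : ℕ} {f e : Fin p → List α},
    (ofFn f).flatten = (ofFn e).flatten → (ofFn f).flatten.Nodup →
    (∀ k, (f k).toFinset ⊆ (e k).toFinset ∨ (e k).toFinset ⊆ (f k).toFinset →
      (f k).toFinset = (e k).toFinset) → f = e
  | 0, _, _, _, _, _ => funext fun k => k.elim0
  | _ + 1, f, e, h, hnd, hcmp => by
    rw [ofFn_succ, ofFn_succ, flatten_cons, flatten_cons] at h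
    rw [ofFn_succ, flatten_cons] at hnd
    obtain ⟨h0, hrest⟩ := append_inj_of_toFinset_comparable h hnd (hcmp 0)
    have htail := eq_of_flatten_ofFn_eq hrest hnd.of_append_right fun k => hcmp k.succ
    exact funext (Fin.cases h0 fun k => congrFun htail k)

end List

section WeakComposition

variable {α : Type*} [DecidableEq α] {p : ℕ}

noncomputable def orderings (A : Fin p → Finset α) : Finset (Fin p → List α) :=
  Fintype.piFinset fun k => (A k).toList.permutations.toFinset

theorem mem_orderings {A : Fin p → Finset α} {f : Fin p → List α} :
    f ∈ orderings A ↔ ∀ k, (f k).Perm (A k).toList := by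
  simp [orderings]

theorem card_orderings (A : Fin p → Finset α) : (orderings A).card = ∏ k, (A k).card ! := by
  simp only [orderings, Fintype.card_piFinset,
    List.toFinset_card_of_nodup (List.nodup_permutations _ (nodup_toList _)),
    List.length_permutations, length_toList]

theorem toFinset_eq_of_mem_orderings {A : Fin p → Finset α} {f : Fin p → List α}
    (hf : f ∈ orderings A) (k : Fin p) : (f k).toFinset = A k := by
  rw [List.toFinset_eq_of_perm _ _ (mem_orderings.1 hf k), toList_toFinset]

theorem nodup_of_mem_orderings {A : Fin p → Finset α} {f : Fin p → List α}
    (hf : f ∈ orderings A) (k : Fin p) : (f k).Nodup :=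
  (mem_orderings.1 hf k).nodup_iff.2 (nodup_toList _)

theorem flatten_ofFn_perm_toList {S : Finset α} {A : Fin p → Finset α} {f : Fin p → List α}
    (hdisj : Pairwise fun i j => Disjoint (A i) (A j)) (hS : univ.biUnion A = S)
    (hf : f ∈ orderings A) : (List.ofFn f).flatten.Perm S.toList := by
  have hnd : (List.ofFn f).flatten.Nodup := by
    refine List.nodup_flatten_ofFn (nodup_of_mem_orderings hf) fun i j hij => ?_
    dsimp only
    rw [← List.disjoint_toFinset_iff_disjoint, toFinset_eq_of_mem_orderings hf,
      toFinset_eq_of_mem_orderings hf]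
    exact hdisj hij
  refine List.perm_of_nodup_nodup_toFinset_eq hnd (nodup_toList S) ?_
  ext a
  simp [← hS, List.mem_flatten, List.mem_ofFn, ← toFinset_eq_of_mem_orderings hf]

theorem injOn_flatten_orderings {M : Finset (Fin p → Finset α)}
    (hnd : ∀ x ∈ M.sigma orderings, (List.ofFn x.2).flatten.Nodup)
    (hanti : ∀ k, IsAntichain (· ⊆ ·) {B | ∃ A ∈ M, A k = B}) :
    Set.InjOn (fun x : (_ : Fin p → Finset α) × (Fin p → List α) => (List.ofFn x.2).flatten)
      ↑(M.sigma orderings) := by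
  rintro ⟨A, f⟩ hAf ⟨B, e⟩ hBe (heq : (List.ofFn f).flatten = (List.ofFn e).flatten)
  have hf : f ∈ orderings A := (mem_sigma.1 hAf).2
  have he : e ∈ orderings B := (mem_sigma.1 hBe).2
  have hmem : ∀ k, A k ∈ {C | ∃ A ∈ M, A k = C} ∧ B k ∈ {C | ∃ A ∈ M, A k = C} :=
    fun k => ⟨⟨A, (mem_sigma.1 hAf).1, rfl⟩, ⟨B, (mem_sigma.1 hBe).1, rfl⟩⟩
  have hfe : f = e := by
    refine List.eq_of_flatten_ofFn_eq heq (hnd _ hAf) fun k hcmp => ?_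
    rw [toFinset_eq_of_mem_orderings hf, toFinset_eq_of_mem_orderings he] at hcmp ⊢
    exact hcmp.elim ((hanti k).eq (hmem k).1 (hmem k).2)
      ((hanti k).eq' (hmem k).1 (hmem k).2)
  obtain rfl : A = B := funext fun k => by
    rw [← toFinset_eq_of_mem_orderings hf, ← toFinset_eq_of_mem_orderings he, hfe]
  rw [hfe]

theorem sum_prod_factorial_card_le_factorial {S : Finset α} {M : Finset (Fin p → Finset α)}
    (hcomp : ∀ A ∈ M, (Pairwise fun i j => Disjoint (A i) (A j)) ∧ univ.biUnion A = S)
    (hanti : ∀ k, IsAntichain (· ⊆ ·) {B | ∃ A ∈ M, A k = B}) :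
    ∑ A ∈ M, ∏ k, (A k).card ! ≤ S.card ! := by
  have hperm : ∀ x ∈ M.sigma orderings, (List.ofFn x.2).flatten.Perm S.toList := fun x hx =>
    flatten_ofFn_perm_toList (hcomp x.1 (mem_sigma.1 hx).1).1 (hcomp x.1 (mem_sigma.1 hx).1).2
      (mem_sigma.1 hx).2
  calc ∑ A ∈ M, ∏ k, (A k).card ! = (M.sigma orderings).card := by
        simp only [card_sigma, card_orderings]
    _ ≤ S.toList.permutations.toFinset.card := by
        refine card_le_card_of_injOn _ (fun x hx => ?_) (injOn_flatten_orderings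
          (fun x hx => (hperm x hx).nodup_iff.2 (nodup_toList S)) hanti)
        simpa using hperm x hx
    _ = S.card ! := by
        rw [List.toFinset_card_of_nodup (List.nodup_permutations _ (nodup_toList S)),
          List.length_permutations, length_toList]

end WeakComposition

theorem card_le_of_sum_prod_factorial_le {ι κ : Type*} {s : Finset κ} {M : Finset ι}
    {c : ι → κ → ℕ} {n m : ℕ} (hsum : ∀ A ∈ M, ∑ k ∈ s, c A k = n)
    (hmax : ∀ A ∈ M, Nat.multinomial s (c A) ≤ m) (hlym : ∑ A ∈ M, ∏ k ∈ s, (c A k)! ≤ n !) :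
    M.card ≤ m := by
  refine Nat.le_of_mul_le_mul_right ?_ (factorial_pos n)
  calc M.card * n ! = ∑ A ∈ M, (∏ k ∈ s, (c A k)!) * Nat.multinomial s (c A) := by
        rw [← smul_eq_mul, ← sum_const]
        exact sum_congr rfl fun A hA => by rw [Nat.multinomial_spec, hsum A hA]
    _ ≤ ∑ A ∈ M, (∏ k ∈ s, (c A k)!) * m :=
        sum_le_sum fun A hA => Nat.mul_le_mul_left _ (hmax A hA)
    _ ≤ m * n ! := by rw [← sum_mul, mul_comm]; exact Nat.mul_le_mul_left _ hlym

theorem exists_forall_multinomial_le (n : ℕ) {p : ℕ} (hp : 0 < p) :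
    ∃ β : Fin p → ℕ, ∑ i, β i = n ∧
      ∀ γ : Fin p → ℕ, ∑ i, γ i = n → Nat.multinomial univ γ ≤ Nat.multinomial univ β := by
  obtain ⟨β, hβ, hmax⟩ := exists_max_image (Nat.antidiagonalTuple p n) (Nat.multinomial univ)
    ⟨Pi.single ⟨0, hp⟩ n, Nat.mem_antidiagonalTuple.2 (by simp)⟩
  exact ⟨β, Nat.mem_antidiagonalTuple.1 hβ, fun γ hγ => hmax γ (Nat.mem_antidiagonalTuple.2 hγ)⟩

/-- Meshalkin's theorem: if `M` is a family of weak compositions of an `n`-set `S` into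
`p ≥ 1` parts and each `M_k` is an antichain, then `|M|` is at most the maximum
multinomial coefficient `multinomial(n; α_1, …, α_p)` over compositions `α` of `n`. -/
theorem meshalkin_theorem {α : Type*} [DecidableEq α] (n p : ℕ) (hp : 1 ≤ p)
    (S : Finset α) (hS : S.card = n) (M : Finset (Fin p → Finset α))
    (hcomp : ∀ A ∈ M, (∀ i j : Fin p, i ≠ j → Disjoint (A i) (A j)) ∧
      Finset.univ.biUnion A = S)
    (hanti : ∀ k : Fin p,
      IsAntichain (· ⊆ ·) {B : Finset α | ∃ A ∈ M, A k = B}) :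
    ∃ β : Fin p → ℕ, ∑ i, β i = n ∧
      M.card ≤ Nat.multinomial Finset.univ β := by
  obtain ⟨β, hβ, hmax⟩ := exists_forall_multinomial_le n hp
  have hsizes : ∀ A ∈ M, ∑ k, (A k).card = n := fun A hA => by
    rw [← hS, ← (hcomp A hA).2, card_biUnion fun i _ j _ hij => (hcomp A hA).1 i j hij]
  refine ⟨β, hβ, card_le_of_sum_prod_factorial_le hsizes (fun A hA => hmax _ (hsizes A hA)) ?_⟩
  exact hS ▸ sum_prod_factorial_card_le_factorial hcomp hanti
end

section
/- Let A be a family of subsets of an n-element set containing no chain with l+1 distinct members (l-chain-free). Then |A| is at most the sum of the l largest binomial coefficients C(n,j) for 0 ≤ j ≤ n. -/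
/-!
The maximal members of an `l + 1`-chain-free family form an antichain and the remaining members
form an `l`-chain-free family, so by induction on `l` and the LYM inequality the layers `𝒜 # r`
satisfy `∑ r, #(𝒜 # r) / C(n, r) ≤ l`. The numbers `x r = #(𝒜 # r) / C(n, r)` lie in `[0, 1]`,
and a sum `∑ r, x r * C(n, r)` under these constraints is largest when all the weight sits on the
`l` largest coefficients: weight moved off the top `l` indices is worth at most the smallest of
their coefficients per unit.
-/

open Finset

/-- A family of sets is `l`-chain-free if it contains no chain of length `l`,
i.e. no `l + 1` distinct pairwise comparable members. -/
def ChainFree {X : Type*} [PartialOrder X] (l : ℕ) (A : Set X) : Prop :=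
  ¬ ∃ c : Fin (l + 1) → X, StrictMono c ∧ ∀ i, c i ∈ A

section ChainFree

variable {X : Type*} [PartialOrder X] {l : ℕ} {A : Set X}

theorem chainFree_zero_iff : ChainFree 0 A ↔ A = ∅ := by
  refine ⟨fun h => Set.eq_empty_of_forall_notMem fun a ha => h ?_, fun h ⟨c, _, hc⟩ => ?_⟩
  · exact ⟨fun _ => a, Subsingleton.strictMono (α := Fin 1) _, fun _ => ha⟩
  · simpa [h] using hc 0

theorem Fin.strictMono_snoc {n : ℕ} {c : Fin (n + 1) → X} (hc : StrictMono c) {x : X}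
    (hx : c (Fin.last n) < x) : StrictMono (Fin.snoc c x : Fin (n + 2) → X) := by
  refine Fin.strictMono_iff_lt_succ.2 fun i => ?_
  induction i using Fin.lastCases with
  | last => simpa using hx
  | cast i =>
    rw [Fin.succ_castSucc, Fin.snoc_castSucc, Fin.snoc_castSucc]
    exact hc Fin.castSucc_lt_succ

theorem ChainFree.sep_not_maximal (h : ChainFree (l + 1) A) :
    ChainFree l {x ∈ A | ¬ Maximal (· ∈ A) x} := by
  rintro ⟨c, hc, hcA⟩
  obtain ⟨y, hlt, hy⟩ := (not_maximal_iff_exists_gt (hcA _).1).1 (hcA (Fin.last l)).2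
  refine h ⟨Fin.snoc c y, Fin.strictMono_snoc hc hlt, Fin.lastCases ?_ fun i => ?_⟩
  · simpa using hy
  · simpa using (hcA i).1

theorem ChainFree.of_image {Y : Type*} [PartialOrder Y] {f : X → Y} (hf : StrictMono f)
    (h : ChainFree l (f '' A)) : ChainFree l A :=
  fun ⟨c, hc, hcA⟩ => h ⟨f ∘ c, hf.comp hc, fun i => Set.mem_image_of_mem f (hcA i)⟩

end ChainFree

section LYM

variable {𝕜 β : Type*} [Semifield 𝕜] [LinearOrder 𝕜] [IsStrictOrderedRing 𝕜] [Fintype β]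

theorem ChainFree.sum_card_slice_div_choose_le {l : ℕ} {ℬ : Finset (Finset β)}
    (h : ChainFree l (ℬ : Set (Finset β))) :
    ∑ r ∈ range (Fintype.card β + 1), (#(ℬ # r) / (Fintype.card β).choose r : 𝕜) ≤ l := by
  classical
  induction l generalizing ℬ with
  | zero => simp [Finset.coe_eq_empty.1 (chainFree_zero_iff.1 h), slice]
  | succ l ih =>
    set ℳ := ℬ.filter fun A => Maximal (· ∈ ℬ) A
    set ℛ := ℬ.filter fun A => ¬ Maximal (· ∈ ℬ) A
    have hℳ : IsAntichain (· ⊆ ·) (ℳ : Set (Finset β)) :=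
      (setOfPred_maximal_antichain _).subset fun A hA => by simpa using (mem_filter.1 hA).2
    have hℛ : ChainFree l (ℛ : Set (Finset β)) := by simpa [ℛ] using h.sep_not_maximal
    have hslice (r : ℕ) : #(ℬ # r) = #(ℳ # r) + #(ℛ # r) := by
      rw [← card_filter_add_card_filter_not (s := ℬ # r) fun A => Maximal (· ∈ ℬ) A]
      congr 2 <;> exact filter_comm ..
    calc ∑ r ∈ range (Fintype.card β + 1), (#(ℬ # r) / (Fintype.card β).choose r : 𝕜)
        = ∑ r ∈ range (Fintype.card β + 1), (#(ℳ # r) / (Fintype.card β).choose r : 𝕜) +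
          ∑ r ∈ range (Fintype.card β + 1), (#(ℛ # r) / (Fintype.card β).choose r : 𝕜) := by
          simp only [hslice, Nat.cast_add, add_div, sum_add_distrib]
      _ ≤ 1 + l := add_le_add (sum_card_slice_div_choose_le_one hℳ) (ih hℛ)
      _ = ↑(l + 1) := by push_cast; ring

end LYM

theorem Finset.exists_subset_card_eq_forall_sdiff_le {ι β : Type*} [DecidableEq ι]
    [LinearOrder β] (s : Finset ι) (f : ι → β) {m : ℕ} (hm : m ≤ #s) :
    ∃ t ⊆ s, #t = m ∧ ∀ i ∈ t, ∀ j ∈ s \ t, f j ≤ f i := by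
  induction m with
  | zero => exact ⟨∅, empty_subset _, card_empty, by simp⟩
  | succ m ih =>
    obtain ⟨t, hts, htm, htop⟩ := ih (by omega)
    obtain ⟨a, ha, hamax⟩ := (s \ t).exists_max_image f <| by
      rw [← card_pos, card_sdiff_of_subset hts]; omega
    have hat := (mem_sdiff.1 ha).2
    refine ⟨insert a t, insert_subset (mem_sdiff.1 ha).1 hts,
      by rw [card_insert_of_notMem hat, htm], fun i hi j hj => ?_⟩
    have hj' : j ∈ s \ t := sdiff_subset_sdiff subset_rfl (subset_insert a t) hj
    rcases mem_insert.1 hi with rfl | hit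
    exacts [hamax j hj', htop i hit j hj']

theorem exists_subset_card_le_sum_mul_le_sum {ι 𝕜 : Type*} [CommRing 𝕜] [LinearOrder 𝕜]
    [IsOrderedRing 𝕜] {s : Finset ι} {x g : ι → 𝕜} {l : ℕ} (hg : ∀ i ∈ s, 0 ≤ g i)
    (hx₀ : ∀ i ∈ s, 0 ≤ x i) (hx₁ : ∀ i ∈ s, x i ≤ 1) (hl : ∑ i ∈ s, x i ≤ l) :
    ∃ t ⊆ s, #t ≤ l ∧ ∑ i ∈ s, x i * g i ≤ ∑ i ∈ t, g i := by
  classical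
  by_cases hls : #s ≤ l
  · exact ⟨s, subset_rfl, hls, sum_le_sum fun i hi => mul_le_of_le_one_left (hg i hi) (hx₁ i hi)⟩
  obtain ⟨t, hts, htl, htop⟩ := exists_subset_card_eq_forall_sdiff_le s g (not_le.1 hls).le
  obtain ⟨j, hj, hjmax⟩ := (s \ t).exists_max_image g <| by
    rw [← card_pos, card_sdiff_of_subset hts]; omega
  have hj0 : 0 ≤ g j := hg j (mem_sdiff.1 hj).1
  refine ⟨t, hts, htl.le, ?_⟩
  -- `g j` separates the values of `g` on `t` from those off `t`
  calc ∑ i ∈ s, x i * g i = ∑ i ∈ s \ t, x i * g i + ∑ i ∈ t, x i * g i := (sum_sdiff hts).symm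
    _ ≤ ∑ i ∈ s \ t, x i * g j + ∑ i ∈ t, x i * g i := by
      gcongr with i hi
      exacts [hx₀ i (mem_sdiff.1 hi).1, hjmax i hi]
    _ = g j * (∑ i ∈ s, x i - ∑ i ∈ t, x i) + ∑ i ∈ t, x i * g i := by
      rw [← sum_sdiff hts (f := x), add_sub_cancel_right, mul_sum]
      simp only [mul_comm]
    _ ≤ g j * (#t - ∑ i ∈ t, x i) + ∑ i ∈ t, x i * g i := by rw [htl]; gcongr
    _ = ∑ i ∈ t, (x i * g i + g j * (1 - x i)) := by
      simp only [sum_add_distrib, ← mul_sum, sum_sub_distrib, sum_const, nsmul_one]; ring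
    _ ≤ ∑ i ∈ t, (x i * g i + g i * (1 - x i)) := by
      gcongr with i hi
      exacts [sub_nonneg.2 (hx₁ i (hts hi)), htop i hi j hj]
    _ = ∑ i ∈ t, g i := sum_congr rfl fun i _ => by ring

theorem ChainFree.exists_card_le_sum_choose {β : Type*} [Fintype β] {l : ℕ}
    {ℬ : Finset (Finset β)} (h : ChainFree l (ℬ : Set (Finset β))) :
    ∃ T ⊆ range (Fintype.card β + 1), #T ≤ l ∧ #ℬ ≤ ∑ j ∈ T, (Fintype.card β).choose j := by
  set n := Fintype.card β
  have hchoose {r : ℕ} (hr : r ∈ range (n + 1)) : (0 : ℚ) < n.choose r :=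
    Nat.cast_pos.2 <| Nat.choose_pos <| Nat.lt_succ_iff.1 <| mem_range.1 hr
  obtain ⟨T, hT, hTl, hsum⟩ := exists_subset_card_le_sum_mul_le_sum (s := range (n + 1))
    (x := fun r => (#(ℬ # r) / n.choose r : ℚ)) (g := fun r => (n.choose r : ℚ))
    (fun r hr => (hchoose hr).le) (fun r _ => by positivity)
    (fun r hr => (div_le_one (hchoose hr)).2 <| mod_cast sized_slice.card_le)
    h.sum_card_slice_div_choose_le
  refine ⟨T, hT, hTl, ?_⟩
  rw [← sum_card_slice, ← Nat.range_succ_eq_Iic]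
  refine (Nat.cast_le (α := ℚ)).1 ?_
  calc ((∑ r ∈ range (n + 1), #(ℬ # r) : ℕ) : ℚ)
      = ∑ r ∈ range (n + 1), (#(ℬ # r) / n.choose r : ℚ) * n.choose r := by
        push_cast
        exact sum_congr rfl fun r hr => (div_mul_cancel₀ _ (hchoose hr).ne').symm
    _ ≤ _ := by exact_mod_cast hsum

theorem erdos_theorem_general {α : Type*} (n l : ℕ) (S : Finset α)
    (hS : S.card = n) (𝒜 : Finset (Finset α)) (hsub : ∀ A ∈ 𝒜, A ⊆ S)
    (hcf : ChainFree l (𝒜 : Set (Finset α))) :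
    ∃ T ⊆ Finset.range (n + 1), T.card ≤ l ∧
      𝒜.card ≤ ∑ j ∈ T, n.choose j := by
  classical
  set ℬ : Finset (Finset S) := 𝒜.image fun A => A.subtype (· ∈ S)
  have hℬ : ℬ.image (map (Function.Embedding.subtype (· ∈ S))) = 𝒜 := by
    rw [image_image]
    exact (image_congr fun A hA => subtype_map_of_mem (hsub A hA)).trans image_id'
  have hℬcf : ChainFree l (ℬ : Set (Finset S)) :=
    ChainFree.of_image (f := map (Function.Embedding.subtype _)) (mapEmbedding _).strictMono <| by
      simpa [← hℬ] using hcf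
  obtain ⟨T, hT, hTl, hℬT⟩ := hℬcf.exists_card_le_sum_choose
  rw [Fintype.card_coe, hS] at hT hℬT
  exact ⟨T, hT, hTl, (hℬ ▸ card_image_le).trans hℬT⟩

/-- Erdős's theorem: an `l`-chain-free family of subsets of an `n`-element set has size at
most the sum of the `l` largest binomial coefficients `C(n, j)`, `0 ≤ j ≤ n`. -/
theorem erdos_theorem {α : Type*} [DecidableEq α] (n l : ℕ) (S : Finset α)
    (hS : S.card = n) (𝒜 : Finset (Finset α)) (hsub : ∀ A ∈ 𝒜, A ⊆ S)
    (hcf : ChainFree l (𝒜 : Set (Finset α))) :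
    ∃ T ⊆ Finset.range (n + 1), T.card ≤ l ∧
      𝒜.card ≤ ∑ j ∈ T, n.choose j :=
  erdos_theorem_general n l S hS 𝒜 hsub hcf
end

section
/- In the Harper–Klain–Rota lemma (m_1 ≥ ⋯ ≥ m_N ≥ 0, q_k ∈ [0,1], Σq_k ≤ P, m_P > 0), equality q_1 m_1 + ⋯ + q_N m_N = m_1 + ⋯ + m_P holds if and only if q_k = 1 for all k with m_k > m_P, q_k = 0 for all k with m_k < m_P, and the sum of q_k over indices with m_k = m_P equals P - P', where P' is the number of indices k with m_k > m_P. -/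
/-!
Write `c = m_P`. The `P` largest values sum to `∑ (m k - c)⁺ + P c`, hence
`(m_1 + ⋯ + m_P) - ∑ q k m k = ∑ ([c < m k] - q k) (m k - c) + c (P - ∑ q k)`.
Every term on the right is `≥ 0`, because `q k ≤ 1` where `m k > c`, `q k ≥ 0` where `m k < c`,
and `∑ q k ≤ P`. Equality therefore forces each term to vanish: this pins `q` down away from
the level `c`, and, as `c > 0`, gives `∑ q k = P`, which is the condition on the level set
`m k = c`.
-/

open Finset

section Excess

variable {ι : Type*} [Fintype ι]

theorem sum_eq_sum_posPart_sub_add_card_mul (T : Finset ι) (m : ι → ℝ) (c : ℝ)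
    (h_above : ∀ k, c < m k → k ∈ T) (h_mem : ∀ k ∈ T, c ≤ m k) :
    ∑ k ∈ T, m k = ∑ k, (m k - c)⁺ + #T * c := by
  have h_sub : ∑ k ∈ T, (m k - c) = ∑ k, (m k - c)⁺ := by
    rw [← sum_subset (subset_univ T)]
    · exact sum_congr rfl fun k hk => (posPart_eq_self.2 (sub_nonneg.2 (h_mem k hk))).symm
    · intro k _ hk
      exact posPart_eq_zero.2 (sub_nonpos.2 (not_lt.1 fun h => hk (h_above k h)))
  rw [← h_sub, sum_sub_distrib, sum_const, nsmul_eq_mul]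
  ring

theorem posPart_sub_add_mul_eq (q x c : ℝ) :
    (x - c)⁺ + c * q = q * x + ((if c < x then 1 else 0) - q) * (x - c) := by
  split_ifs with h
  · rw [posPart_eq_self.2 (sub_nonneg.2 h.le)]; ring
  · rw [posPart_eq_zero.2 (sub_nonpos.2 (not_lt.1 h))]; ring

variable {q x c : ℝ}

theorem ite_sub_mul_sub_nonneg (hq0 : 0 ≤ q) (hq1 : q ≤ 1) :
    0 ≤ ((if c < x then 1 else 0) - q) * (x - c) := by
  split_ifs with h
  · exact mul_nonneg (sub_nonneg.2 hq1) (sub_nonneg.2 h.le)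
  · exact mul_nonneg_of_nonpos_of_nonpos (by simpa using hq0) (sub_nonpos.2 (not_lt.1 h))

theorem ite_sub_mul_sub_eq_zero_iff :
    ((if c < x then 1 else 0) - q) * (x - c) = 0 ↔ (c < x → q = 1) ∧ (x < c → q = 0) := by
  rcases lt_trichotomy x c with h | rfl | h
  · simp [h, h.not_gt, h.ne, sub_eq_zero]
  · simp
  · simp [h, h.not_gt, h.ne', sub_eq_zero, eq_comm (a := (1 : ℝ))]

theorem eq_ite_add_ite_of_level (h_above : c < x → q = 1) (h_below : x < c → q = 0) :
    q = (if c < x then 1 else 0) + if x = c then q else 0 := by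
  rcases lt_trichotomy x c with h | rfl | h
  · simp [h_below h, h.not_gt, h.ne]
  · simp
  · simp [h_above h, h, h.ne']

/-- The equality case of `∑ q k * m k ≤ ∑ (m k - c)⁺ + n * c`. -/
theorem sum_mul_eq_sum_posPart_add_iff {q m : ι → ℝ} {c n : ℝ}
    (hq0 : ∀ k, 0 ≤ q k) (hq1 : ∀ k, q k ≤ 1) (hsum : ∑ k, q k ≤ n) (hc : 0 < c) :
    ∑ k, q k * m k = ∑ k, (m k - c)⁺ + n * c ↔
      (∀ k, c < m k → q k = 1) ∧ (∀ k, m k < c → q k = 0) ∧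
        ∑ k with m k = c, q k = n - #{k | c < m k} := by
  set defect := fun k => ((if c < m k then 1 else 0) - q k) * (m k - c)
  have h_decomp : ∑ k, (m k - c)⁺ + n * c - ∑ k, q k * m k
      = ∑ k, defect k + c * (n - ∑ k, q k) := by
    have := sum_congr rfl fun k (_ : k ∈ univ) => posPart_sub_add_mul_eq (q k) (m k) c
    rw [sum_add_distrib, sum_add_distrib, ← mul_sum] at this
    simp only [defect]
    linarith
  have h_defect : ∀ k ∈ univ, 0 ≤ defect k := fun k _ => ite_sub_mul_sub_nonneg (hq0 k) (hq1 k)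
  have h_mass : 0 ≤ c * (n - ∑ k, q k) := mul_nonneg hc.le (by linarith)
  have h_eq_iff : ∑ k, q k * m k = ∑ k, (m k - c)⁺ + n * c ↔
      (∀ k, defect k = 0) ∧ ∑ k, q k = n := by
    rw [eq_comm, ← sub_eq_zero, h_decomp, add_eq_zero_iff_of_nonneg (sum_nonneg h_defect) h_mass,
      sum_eq_zero_iff_of_nonneg h_defect, mul_eq_zero, sub_eq_zero, eq_comm (a := n)]
    simp [hc.ne']
  simp only [h_eq_iff, defect, ite_sub_mul_sub_eq_zero_iff, forall_and, and_assoc]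
  refine and_congr_right fun h_above => and_congr_right fun h_below => ?_
  have h_total : ∑ k, q k = #{k | c < m k} + ∑ k with m k = c, q k := by
    rw [sum_congr rfl fun k _ => eq_ite_add_ite_of_level (h_above k) (h_below k),
      sum_add_distrib, sum_boole, sum_ite, sum_const_zero, add_zero]
  rw [h_total]
  constructor <;> intro h <;> linarith

end Excess

/-- Equality case of the Harper–Klain–Rota lemma: with `m 0 ≥ ⋯ ≥ m (N-1) ≥ 0`,
`q k ∈ [0,1]`, `1 ≤ P ≤ N`, `∑ q k ≤ P`, and `m_P > 0` (here `mP` is the `P`-th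
largest value, at index `P - 1`), equality `∑ q k * m k = m_1 + ⋯ + m_P` holds iff
`q k = 1` whenever `m k > mP`, `q k = 0` whenever `m k < mP`, and the `q k` over
indices with `m k = mP` sum to `P - P'` where `P'` is the number of indices with
`m k > mP`. -/
theorem harper_klain_rota_equality (N P : ℕ) (hP1 : 1 ≤ P) (hPN : P ≤ N)
    (m q : Fin N → ℝ) (hm : Antitone m)
    (hq0 : ∀ k, 0 ≤ q k) (hq1 : ∀ k, q k ≤ 1)
    (hsum : ∑ k, q k ≤ P)
    (mP : ℝ) (hmP : mP = m ⟨P - 1, by omega⟩) (hmPpos : 0 < mP)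
    (P' : ℕ) (hP' : P' = (Finset.univ.filter (fun k : Fin N => mP < m k)).card) :
    (∑ k, q k * m k =
        ∑ k ∈ Finset.univ.filter (fun k : Fin N => (k : ℕ) < P), m k) ↔
      ((∀ k, mP < m k → q k = 1) ∧ (∀ k, m k < mP → q k = 0) ∧
        ∑ k ∈ Finset.univ.filter (fun k : Fin N => m k = mP), q k
          = (P : ℝ) - (P' : ℝ)) := by
  have h_top_ge : ∀ k : Fin N, (k : ℕ) < P → mP ≤ m k := fun k hk =>
    hmP ▸ hm (Fin.le_def.2 (by simp only; omega))
  have h_gt_top : ∀ k : Fin N, mP < m k → (k : ℕ) < P := fun k hk => by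
    by_contra h
    exact hk.not_ge (hmP ▸ hm (Fin.le_def.2 (by simp only; omega)))
  have h_top : ∑ k ∈ univ.filter (fun k : Fin N => (k : ℕ) < P), m k
      = ∑ k, (m k - mP)⁺ + P * mP := by
    rw [sum_eq_sum_posPart_sub_add_card_mul _ m mP (by simpa using h_gt_top)
      (by simpa using h_top_ge), Fin.card_filter_val_lt, min_eq_right hPN]
  rw [h_top, hP']
  exact sum_mul_eq_sum_posPart_add_iff hq0 hq1 hsum hmPpos
end

section
/- Fix nonnegative integers α_1,…,α_p with α_1+⋯+α_p = n. The number of sequences (U_1,…,U_p) of subspaces of an n-dimensional vector space V over F_q with dim U_i = α_i and V = U_1 ⊕ ⋯ ⊕ U_p (equivalently, the U_i span V and the dimensions sum to n) equals the Gaussian multinomial coefficient [n; α_1,…,α_p]_q times q^{s_2(α)}, where s_2(α) = Σ_{i<j} α_i α_j. -/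
open Finset

/-- The `q`-factorial `n!_q = (q^n - 1)(q^(n-1) - 1) ⋯ (q - 1)`. -/
def qFact (q n : ℕ) : ℕ := ∏ i ∈ Finset.range n, (q ^ (i + 1) - 1)

/-- The Gaussian multinomial coefficient `[n; α_1, …, α_p]_q = n!_q / (α_1!_q ⋯ α_p!_q)`. -/
noncomputable def gaussMultinomial (q n : ℕ) {p : ℕ} (α : Fin p → ℕ) : ℚ :=
  (qFact q n : ℚ) / ∏ i, (qFact q (α i) : ℚ)

/-- The second elementary symmetric function `s_2(α) = ∑_{i<j} α_i α_j`. -/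
def s2 {p : ℕ} (α : Fin p → ℕ) : ℕ :=
  ∑ i, ∑ j ∈ Finset.univ.filter (fun j : Fin p => i < j), α i * α j

/-!
A linearly independent family indexed by `Σ i, Fin (α i)` in `V` (with `∑ α i = dim V`) is the
same thing as a Meshalkin sequence, namely the spans of its blocks, together with an ordered basis
of each block. Counting ordered bases with `|GL_m(F_q)| = q^(m(m-1)/2) · m!_q` gives
`#Meshalkin · ∏ q^(α_i(α_i-1)/2) α_i!_q = q^(n(n-1)/2) n!_q`, and the surplus exponent
`n(n-1)/2 - ∑ α_i(α_i-1)/2` counts the pairs in different blocks, i.e. equals `s_2(α)`.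
-/

lemma sum_range_add_id (a b : ℕ) :
    ∑ i ∈ range (a + b), i = ∑ i ∈ range a, i + ∑ i ∈ range b, i + a * b := by
  rw [sum_range_add, sum_add_distrib, sum_const, card_range, smul_eq_mul]
  ring

lemma s2_succ {p : ℕ} (α : Fin (p + 1) → ℕ) :
    s2 α = α 0 * ∑ i : Fin p, α i.succ + s2 (fun i => α i.succ) := by
  simp [s2, sum_filter, Fin.sum_univ_succ, Fin.succ_lt_succ_iff, mul_sum]

lemma sum_range_sum_eq_sum_add_s2 {p : ℕ} (α : Fin p → ℕ) :
    ∑ i ∈ range (∑ i, α i), i = ∑ i, ∑ j ∈ range (α i), j + s2 α := by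
  induction p with
  | zero => simp [s2]
  | succ p ih =>
    rw [Fin.sum_univ_succ, sum_range_add_id, ih, s2_succ, Fin.sum_univ_succ]
    ring

lemma qFact_pos {q : ℕ} (hq : 1 < q) (m : ℕ) : 0 < qFact q m :=
  prod_pos fun i _ => Nat.sub_pos_of_lt (Nat.one_lt_pow i.succ_ne_zero hq)

lemma prod_range_pow_sub_pow (q m : ℕ) :
    ∏ i ∈ range m, (q ^ m - q ^ i) = q ^ (∑ i ∈ range m, i) * qFact q m := by
  have hfactor : ∀ i ∈ range m, q ^ m - q ^ i = q ^ i * (q ^ (m - 1 - i + 1) - 1) := by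
    intro i hi
    rw [Nat.mul_sub, mul_one, ← pow_add]
    congr 2
    have := mem_range.1 hi
    omega
  rw [prod_congr rfl hfactor, prod_mul_distrib, prod_pow_eq_pow_sum, qFact,
    prod_range_reflect (fun i => q ^ (i + 1) - 1)]

open Module

lemma card_linearIndependent_of_card_eq_finrank {K V ι : Type*} [DivisionRing K] [Fintype K]
    [AddCommGroup V] [Module K V] [FiniteDimensional K V] [Fintype ι]
    (hι : Fintype.card ι = finrank K V) :
    Nat.card {s : ι → V // LinearIndependent K s} =
      Fintype.card K ^ (∑ i ∈ range (finrank K V), i) * qFact (Fintype.card K) (finrank K V) := by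
  have : Finite V := Module.finite_of_finite K
  let e : ι ≃ Fin (finrank K V) := Fintype.equivFinOfCardEq hι
  have hcongr : {s : ι → V // LinearIndependent K s} ≃
      {s : Fin (finrank K V) → V // LinearIndependent K s} :=
    (e.arrowCongr (Equiv.refl V)).subtypeEquiv fun s =>
      (linearIndependent_equiv' e.symm (by ext; simp [Equiv.arrowCongr])).symm
  rw [Nat.card_congr hcongr, card_linearIndependent le_rfl,
    Fin.prod_univ_eq_prod_range (fun i => _ ^ _ - _ ^ i), prod_range_pow_sub_pow]

lemma Submodule.span_range_sigma {R M ι : Type*} [Semiring R] [AddCommMonoid M] [Module R M]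
    {κ : ι → Type*} (f : (Σ i, κ i) → M) :
    span R (Set.range f) = ⨆ i, span R (Set.range fun j => f ⟨i, j⟩) := by
  rw [Set.range_sigma_eq_iUnion_range, span_iUnion]

lemma Submodule.span_range_subtype_eq_of_card_eq_finrank {K V ι : Type*} [DivisionRing K]
    [AddCommGroup V] [Module K V] [Fintype ι] {W : Submodule K V} [FiniteDimensional K W]
    {t : ι → W} (ht : LinearIndependent K t) (hcard : Fintype.card ι = finrank K W) :
    span K (Set.range fun j => (t j : V)) = W := by
  rw [show (Set.range fun j => (t j : V)) = W.subtype '' Set.range t from Set.range_comp _ _,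
    span_image, ht.span_eq_top_of_card_eq_finrank' hcard, map_top, range_subtype]

section Meshalkin

variable {K V ι : Type*} [DivisionRing K] [AddCommGroup V] [Module K V] {α : ι → ℕ}

variable (K V) in
abbrev MeshalkinSeq (α : ι → ℕ) : Type _ :=
  {a : ι → Submodule K V // (∀ i, finrank K (a i) = α i) ∧ ⨆ i, a i = ⊤}

variable [FiniteDimensional K V]

lemma MeshalkinSeq.span_range_eq (a : MeshalkinSeq K V α) {i : ι} {t : Fin (α i) → a.1 i}
    (ht : LinearIndependent K t) : Submodule.span K (Set.range fun j => (t j : V)) = a.1 i :=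
  Submodule.span_range_subtype_eq_of_card_eq_finrank ht (by rw [Fintype.card_fin, a.2.1])

variable [Fintype ι]

namespace MeshalkinSeq

lemma linearIndependent_sigma (a : MeshalkinSeq K V α) (hα : ∑ i, α i = finrank K V)
    {t : ∀ i, Fin (α i) → a.1 i} (ht : ∀ i, LinearIndependent K (t i)) :
    LinearIndependent K fun x : Σ i, Fin (α i) => (t x.1 x.2 : V) := by
  refine linearIndependent_of_top_le_span_of_card_eq_finrank ?_ (by simp [hα])
  rw [Submodule.span_range_sigma]
  simp only [a.span_range_eq (ht _), a.2.2, le_rfl]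

def ofLinearIndependent (hα : ∑ i, α i = finrank K V) {s : (Σ i, Fin (α i)) → V}
    (hs : LinearIndependent K s) : MeshalkinSeq K V α :=
  ⟨fun i => Submodule.span K (Set.range fun j => s ⟨i, j⟩),
    fun i => (finrank_span_eq_card (hs.comp (Sigma.mk i) sigma_mk_injective)).trans
      (Fintype.card_fin _),
    by rw [← Submodule.span_range_sigma, hs.span_eq_top_of_card_eq_finrank' (by simp [hα])]⟩

end MeshalkinSeq

lemma card_linearIndependent_sigma_eq (hα : ∑ i, α i = finrank K V) :
    Nat.card {s : (Σ i, Fin (α i)) → V // LinearIndependent K s} =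
      Nat.card (Σ a : MeshalkinSeq K V α,
        ∀ i, {t : Fin (α i) → a.1 i // LinearIndependent K t}) := by
  refine (Nat.card_eq_of_bijective (fun x => ⟨fun y => ((x.2 y.1).1 y.2 : V),
    x.1.linearIndependent_sigma hα fun i => (x.2 i).2⟩) ⟨?_, ?_⟩).symm
  · rintro ⟨a, t⟩ ⟨a', t'⟩ h
    have hval (i : ι) (j : Fin (α i)) : ((t i).1 j : V) = ((t' i).1 j : V) :=
      congrFun (congrArg Subtype.val h) ⟨i, j⟩
    obtain rfl : a = a' := Subtype.ext <| funext fun i => by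
      rw [← a.span_range_eq (t i).2, ← a'.span_range_eq (t' i).2]
      simp only [hval]
    obtain rfl : t = t' := funext fun i => Subtype.ext <| funext fun j => Subtype.ext (hval i j)
    rfl
  · rintro ⟨s, hs⟩
    exact ⟨⟨MeshalkinSeq.ofLinearIndependent hα hs, fun i =>
      ⟨fun j => ⟨s ⟨i, j⟩, Submodule.subset_span (Set.mem_range_self j)⟩,
        .of_comp (Submodule.subtype _) (hs.comp _ sigma_mk_injective)⟩⟩, rfl⟩

local notation "q" => Fintype.card K

theorem card_meshalkinSeq_mul_prod [Fintype K] (hα : ∑ i, α i = finrank K V) :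
    Nat.card (MeshalkinSeq K V α) * ∏ i, (q ^ (∑ j ∈ range (α i), j) * qFact q (α i)) =
      q ^ (∑ i ∈ range (finrank K V), i) * qFact q (finrank K V) := by
  have : Finite V := Module.finite_of_finite K
  have : Fintype (MeshalkinSeq K V α) := Fintype.ofFinite _
  rw [← card_linearIndependent_of_card_eq_finrank (ι := Σ i, Fin (α i)) (by simp [hα]),
    card_linearIndependent_sigma_eq hα, Nat.card_sigma]
  have hfiber (a : MeshalkinSeq K V α) (i : ι) :
      Nat.card {t : Fin (α i) → a.1 i // LinearIndependent K t} =
        q ^ (∑ j ∈ range (α i), j) * qFact q (α i) := by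
    rw [card_linearIndependent_of_card_eq_finrank (by rw [Fintype.card_fin, a.2.1]), a.2.1]
  simp only [Nat.card_pi, hfiber, sum_const, card_univ, smul_eq_mul, Nat.card_eq_fintype_card]

end Meshalkin

/-- The number of Meshalkin sequences `(U_1, …, U_p)` of subspaces of an `n`-dimensional
`F_q`-vector space `V` with `dim U_i = α_i` and `V = U_1 ⊕ ⋯ ⊕ U_p` (equivalently, the
`U_i` span `V` and the dimensions sum to `n`) equals `[n; α]_q · q^(s_2(α))`. -/
theorem count_meshalkin_sequences (q n p : ℕ) (α : Fin p → ℕ) (hα : ∑ i, α i = n)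
    (F : Type*) [Field F] [Fintype F] (hq : Fintype.card F = q)
    (V : Type*) [AddCommGroup V] [Module F V] [FiniteDimensional F V]
    (hn : Module.finrank F V = n) :
    (Nat.card {a : Fin p → Submodule F V //
        (∀ i, Module.finrank F (a i) = α i) ∧ (⨆ i, a i) = ⊤} : ℚ) =
      gaussMultinomial q n α * (q : ℚ) ^ (s2 α) := by
  subst hq hα
  have hcount := card_meshalkinSeq_mul_prod hn.symm
  rw [hn, sum_range_sum_eq_sum_add_s2, pow_add, prod_mul_distrib, prod_pow_eq_pow_sum] at hcount
  have hq : 1 < Fintype.card F := Fintype.one_lt_card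
  have hP : ∏ i, (qFact (Fintype.card F) (α i) : ℚ) ≠ 0 :=
    prod_ne_zero_iff.2 fun i _ => by exact_mod_cast (qFact_pos hq _).ne'
  rw [gaussMultinomial, div_mul_eq_mul_div, eq_div_iff hP]
  refine mul_left_cancel₀ (pow_ne_zero (∑ i, ∑ j ∈ range (α i), j)
    (Nat.cast_ne_zero.2 (by omega : Fintype.card F ≠ 0))) ?_
  have hcountQ := congrArg (Nat.cast : ℕ → ℚ) hcount
  push_cast at hcountQ
  linear_combination hcountQ
end

section
/- Let A be an l-chain-free family of subspaces of an n-dimensional vector space over F_q. Then |A| is at most the sum of the l largest Gaussian binomial coefficients [n choose j]_q for 0 ≤ j ≤ n. -/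
open Finset

/-- The Gaussian binomial coefficient `[n choose k]_q = n!_q / (k!_q (n-k)!_q)`. -/
noncomputable def gaussBinom (q n k : ℕ) : ℚ :=
  (qFact q n : ℚ) / ((qFact q k : ℚ) * (qFact q (n - k) : ℚ))

section Aux

open Module Submodule

lemma nat_card_sigma_eq {ι : Type*} [Fintype ι] {β : ι → Type*} [hb : ∀ i, Finite (β i)] :
    Nat.card ((i : ι) × β i) = ∑ i, Nat.card (β i) := by
  classical
  letI : ∀ i, Fintype (β i) := fun i => Fintype.ofFinite _
  rw [Nat.card_eq_fintype_card, Fintype.card_sigma]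
  simp [Nat.card_eq_fintype_card]

lemma card_filter_univ_eq_nat_card {α : Type*} [Fintype α] (p : α → Prop) [DecidablePred p] :
    (Finset.univ.filter p).card = Nat.card {x // p x} := by
  rw [Nat.card_eq_fintype_card]
  exact (Fintype.card_subtype p).symm

section FlagRank
variable {F V : Type*} [Field F] [AddCommGroup V] [Module F V] [FiniteDimensional F V]

lemma flag_rank {k : ℕ} (hk : finrank F V = k) {f : Fin (k + 1) → Submodule F V}
    (hf : StrictMono f) (i : Fin (k + 1)) : finrank F (f i) = (i : ℕ) := by
  set g : Fin (k + 1) → ℕ := fun i => finrank F (f i) with hg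
  have hgs : StrictMono g := fun a b hab => Submodule.finrank_lt_finrank_of_lt (hf hab)
  have hlow : ∀ m : ℕ, ∀ hm : m < k + 1, m ≤ g ⟨m, hm⟩ := by
    intro m
    induction m with
    | zero => exact fun _ => Nat.zero_le _
    | succ p ih =>
      intro hm
      have h1 : p < k + 1 := by omega
      have := hgs (show (⟨p, h1⟩ : Fin (k+1)) < ⟨p+1, hm⟩ by simp [Fin.lt_def])
      have := ih h1
      omega
  have hup : ∀ m : ℕ, ∀ hm : m < k + 1, g ⟨m, hm⟩ ≤ m + (g ⟨k, by omega⟩ - k) := by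
    have hdiff : ∀ m : ℕ, ∀ hm : m < k + 1, g ⟨k, by omega⟩ ≥ g ⟨m, hm⟩ + (k - m) := by
      intro m hm
      have : ∀ t : ℕ, ∀ ht : m + t < k + 1, g ⟨m + t, ht⟩ ≥ g ⟨m, hm⟩ + t := by
        intro t
        induction t with
        | zero => simp
        | succ p ih =>
          intro ht
          have h1 : m + p < k + 1 := by omega
          have := hgs (show (⟨m + p, h1⟩ : Fin (k+1)) < ⟨m + (p+1), ht⟩ by
            simp only [Fin.lt_def]; omega)
          have := ih h1
          omega
      have := this (k - m) (by omega)
      have h2 : m + (k - m) = k := by omega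
      simp_rw [h2] at this
      omega
    intro m hm
    have := hdiff m hm
    omega
  have hbound : g ⟨k, by omega⟩ ≤ k := le_of_le_of_eq (Submodule.finrank_le _) hk
  have h1 := hlow i.1 i.2
  have h2 := hup i.1 i.2
  have h3 : (⟨i.1, i.2⟩ : Fin (k+1)) = i := rfl
  rw [h3] at h1 h2
  show g i = (i : ℕ)
  omega

lemma map_mkQ_lt {U p p' : Submodule F V} (hU : U ≤ p) (h : p < p') :
    map U.mkQ p < map U.mkQ p' := by
  refine lt_of_le_of_ne (Submodule.map_mono h.le) (fun heq => h.ne ?_)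
  have := congrArg (comap U.mkQ) heq
  rwa [Submodule.comap_map_mkQ, Submodule.comap_map_mkQ, sup_eq_right.mpr hU,
    sup_eq_right.mpr (hU.trans h.le)] at this

lemma comap_subtype_lt {U p p' : Submodule F V} (hp : p ≤ U) (hp' : p' ≤ U) (h : p < p') :
    comap U.subtype p < comap U.subtype p' := by
  refine lt_of_le_of_ne (Submodule.comap_mono h.le) (fun heq => h.ne ?_)
  have := congrArg (map U.subtype) heq
  rwa [Submodule.map_comap_subtype, Submodule.map_comap_subtype, inf_eq_right.mpr hp,
    inf_eq_right.mpr hp'] at this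

end FlagRank

section Lines
variable (F : Type*) [Field F] [Fintype F]

lemma finite_submodule (W : Type*) [AddCommGroup W] [Module F W] [FiniteDimensional F W] :
    Finite (Submodule F W) := by
  have : Finite W := Module.finite_of_finite F
  exact Finite.of_injective (fun p => (p : Set W)) SetLike.coe_injective

lemma card_ne_zero_sub (M : Type*) [Zero M] [Fintype M] [DecidableEq M] :
    Fintype.card {y : M // y ≠ 0} = Fintype.card M - 1 := by
  have := Fintype.card_subtype_compl (fun y : M => y = 0)
  simpa [Fintype.card_subtype_eq] using this

lemma line_count (W : Type*) [AddCommGroup W] [Module F W] [FiniteDimensional F W] :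
    (Fintype.card F - 1) * Nat.card {ℓ : Submodule F W // finrank F ℓ = 1}
      = Fintype.card F ^ finrank F W - 1 := by
  classical
  have hfinW : Finite W := Module.finite_of_finite F
  cases nonempty_fintype W
  have hfinS : Finite (Submodule F W) := finite_submodule F W
  have : Fintype (Submodule F W) := Fintype.ofFinite _
  set q := Fintype.card F with hq
  have hcW : Fintype.card W = q ^ finrank F W := card_eq_pow_finrank
  set L := {ℓ : Submodule F W // finrank F ℓ = 1} with hL
  set f : {v : W // v ≠ 0} → L := fun v => ⟨Submodule.span F {v.1}, finrank_span_singleton v.2⟩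
    with hf
  have fiber_equiv : ∀ ℓ : L, {x : {v : W // v ≠ 0} // f x = ℓ} ≃ {y : ℓ.1 // y ≠ 0} := by
    intro ℓ
    refine ⟨fun x => ⟨⟨x.1.1, ?_⟩, ?_⟩, fun y => ⟨⟨y.1.1, fun h => y.2 (by ext; simp [h])⟩, ?_⟩,
      ?_, ?_⟩
    · have h : Submodule.span F {x.1.1} = ℓ.1 := congrArg Subtype.val x.2
      exact h ▸ Submodule.mem_span_singleton_self _
    · intro h
      exact x.1.2 (by simpa using congrArg Subtype.val h)
    · have hy : (y.1 : W) ≠ 0 := fun h => y.2 (by ext; simp [h])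
      refine Subtype.ext ?_
      show Submodule.span F {(y.1 : W)} = ℓ.1
      refine Submodule.eq_of_le_of_finrank_le ?_ ?_
      · rw [Submodule.span_le, Set.singleton_subset_iff]; exact y.1.2
      · rw [ℓ.2, finrank_span_singleton hy]
    · intro x
      apply Subtype.ext
      apply Subtype.ext
      rfl
    · intro y
      apply Subtype.ext
      apply Subtype.ext
      rfl
  have hfibcard : ∀ ℓ : L, Fintype.card {x : {v : W // v ≠ 0} // f x = ℓ} = q - 1 := by
    intro ℓ
    rw [Fintype.card_congr (fiber_equiv ℓ)]
    have h1 : Fintype.card ℓ.1 = q ^ finrank F ℓ.1 := card_eq_pow_finrank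
    rw [card_ne_zero_sub, h1, ℓ.2, pow_one]
  have hsig : Fintype.card ((ℓ : L) × {x : {v : W // v ≠ 0} // f x = ℓ})
      = Fintype.card {v : W // v ≠ 0} := Fintype.card_congr (Equiv.sigmaFiberEquiv f)
  rw [Fintype.card_sigma] at hsig
  simp only [hfibcard] at hsig
  rw [Finset.sum_const, smul_eq_mul, card_ne_zero_sub, hcW] at hsig
  rw [Nat.card_eq_fintype_card, ← Finset.card_univ, mul_comm]
  exact hsig

lemma flag_count : ∀ (k : ℕ) (W : Type*) [AddCommGroup W] [Module F W] [FiniteDimensional F W],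
    finrank F W = k →
    (Fintype.card F - 1) ^ k * Nat.card {f : Fin (k + 1) → Submodule F W // StrictMono f}
      = qFact (Fintype.card F) k := by
  intro k
  induction k with
  | zero =>
    intro W _ _ _ hW
    have hsub : Subsingleton W := by
      rw [finrank_zero_iff] at hW; exact hW
    have hsubm : Subsingleton (Submodule F W) := by infer_instance
    have : Subsingleton {f : Fin 1 → Submodule F W // StrictMono f} := by
      constructor
      intro a b
      apply Subtype.ext; funext i
      exact Subsingleton.elim _ _
    have hne : Nonempty {f : Fin 1 → Submodule F W // StrictMono f} :=
      ⟨⟨fun _ => ⊥, Subsingleton.strictMono _⟩⟩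
    rw [Nat.card_eq_one_iff_unique.mpr ⟨this, hne⟩]
    simp [qFact]
  | succ k ih =>
    intro W _ _ _ hW
    classical
    have hfinW : Finite W := Module.finite_of_finite F
    have hfinS : Finite (Submodule F W) := finite_submodule F W
    obtain ⟨instS⟩ := nonempty_fintype (Submodule F W)
    set q := Fintype.card F with hq
    set L := {ℓ : Submodule F W // finrank F ℓ = 1} with hL
    set Flags := {f : Fin (k + 2) → Submodule F W // StrictMono f} with hFlags
    set Φ : Flags → L := fun x => ⟨x.1 1, by
      have := flag_rank hW x.2 1
      simpa using this⟩ with hΦ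
    have fibeq : ∀ ℓ : L, {x : Flags // Φ x = ℓ}
        ≃ {g : Fin (k + 1) → Submodule F (W ⧸ ℓ.1) // StrictMono g} := by
      intro ℓ
      have hrq : finrank F (W ⧸ ℓ.1) = k := by
        have := Submodule.finrank_quotient_add_finrank ℓ.1
        rw [hW, ℓ.2] at this
        omega
      refine ⟨fun x => ⟨fun i => map ℓ.1.mkQ (x.1.1 i.succ), ?_⟩,
              fun g => ⟨⟨fun j => if h : j = 0 then ⊥
                else comap ℓ.1.mkQ (g.1 (j.pred h)), ?_⟩, ?_⟩,
              ?_, ?_⟩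
      · intro a b hab
        have hl : ℓ.1 = x.1.1 1 := (congrArg Subtype.val x.2).symm
        have h1a : (1 : Fin (k+2)) ≤ a.succ := by
          rw [Fin.le_def]; simp
        refine map_mkQ_lt ?_ (x.1.2 (by rwa [Fin.succ_lt_succ_iff]))
        rw [hl]; exact x.1.2.monotone h1a
      · rw [Fin.strictMono_iff_lt_succ]
        intro i
        by_cases hi : i = 0
        · subst hi
          rw [dif_pos Fin.castSucc_zero, dif_neg (Fin.succ_ne_zero 0)]
          have h1 : ∀ p, ℓ.1 ≤ comap ℓ.1.mkQ p := by
            intro p w hw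
            simp [Submodule.mem_comap, (Submodule.Quotient.mk_eq_zero ℓ.1).mpr hw,
              Submodule.mkQ_apply]
          have h2 : (⊥ : Submodule F W) < ℓ.1 := by
            rw [bot_lt_iff_ne_bot]
            intro hb
            have := ℓ.2
            rw [hb] at this
            simp at this
          exact lt_of_lt_of_le h2 (h1 _)
        · have hcs : (i.castSucc ≠ 0) := by
            exact Fin.castSucc_ne_zero_iff.mpr hi
          rw [dif_neg hcs, dif_neg (Fin.succ_ne_zero i)]
          have hidx : (i.castSucc.pred hcs) < (i.succ.pred (Fin.succ_ne_zero i)) := by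
            rw [Fin.lt_def]
            simp [Fin.pred, Fin.ext_iff]
            have : (i : ℕ) ≠ 0 := fun h => hi (Fin.ext h)
            exact Nat.pos_of_ne_zero this
          exact Subtype.coe_lt_coe.mpr ((Submodule.comapMkQRelIso ℓ.1).strictMono (g.2 hidx))
      · apply Subtype.ext
        have h1 : ((1 : Fin (k+2))) ≠ 0 := by simp [Fin.ext_iff]
        show (if h : (1 : Fin (k+2)) = 0 then (⊥ : Submodule F W)
            else comap ℓ.1.mkQ (g.1 ((1 : Fin (k+2)).pred h))) = ℓ.1
        rw [dif_neg h1]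
        have h0 : ((1 : Fin (k+2)).pred h1) = 0 := by
          simp [Fin.ext_iff]
        rw [h0]
        have hg0 : g.1 0 = ⊥ := by
          have := flag_rank hrq g.2 0
          simpa [Submodule.finrank_eq_zero] using this
        rw [hg0, Submodule.comap_bot, Submodule.ker_mkQ]
      · intro x
        apply Subtype.ext
        apply Subtype.ext
        funext j
        show (if h : j = 0 then (⊥ : Submodule F W)
            else comap ℓ.1.mkQ (map ℓ.1.mkQ (x.1.1 (j.pred h).succ))) = x.1.1 j
        by_cases hj : j = 0
        · subst hj
          rw [dif_pos rfl]
          have := flag_rank hW x.1.2 0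
          simp only [Fin.val_zero] at this
          exact (Submodule.finrank_eq_zero.mp this).symm
        · rw [dif_neg hj, Fin.succ_pred, Submodule.comap_map_mkQ]
          have hl : ℓ.1 = x.1.1 1 := (congrArg Subtype.val x.2).symm
          have h1j : (1 : Fin (k+2)) ≤ j := by
            rw [Fin.le_def]
            have : (j : ℕ) ≠ 0 := fun h => hj (Fin.ext h)
            simp
            omega
          rw [sup_eq_right.mpr (hl ▸ x.1.2.monotone h1j)]
      · intro g
        apply Subtype.ext
        funext i
        show map ℓ.1.mkQ (if h : i.succ = 0 then (⊥ : Submodule F W)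
            else comap ℓ.1.mkQ (g.1 (i.succ.pred h))) = g.1 i
        rw [dif_neg (Fin.succ_ne_zero i), Fin.pred_succ, Submodule.map_comap_eq,
          Submodule.range_mkQ, top_inf_eq]
    obtain ⟨instL⟩ := nonempty_fintype L
    have hFlagsFin : Finite Flags := by
      rw [hFlags]
      infer_instance
    have hcard1 : Nat.card Flags = ∑ ℓ : L, Nat.card {x : Flags // Φ x = ℓ} := by
      rw [← nat_card_sigma_eq]
      exact (Nat.card_congr (Equiv.sigmaFiberEquiv Φ)).symm
    have hstep : ∀ ℓ : L, (q - 1) ^ (k + 1) * Nat.card {x : Flags // Φ x = ℓ}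
        = (q - 1) * qFact q k := by
      intro ℓ
      have hrq : finrank F (W ⧸ ℓ.1) = k := by
        have := Submodule.finrank_quotient_add_finrank ℓ.1
        rw [hW, ℓ.2] at this
        omega
      rw [Nat.card_congr (fibeq ℓ), pow_succ, mul_comm ((q-1)^k) (q-1), mul_assoc,
        ih (W ⧸ ℓ.1) hrq]
    have hlc := line_count F W
    rw [hW, ← hq] at hlc
    calc (q - 1) ^ (k + 1) * Nat.card Flags
        = ∑ ℓ : L, (q - 1) ^ (k + 1) * Nat.card {x : Flags // Φ x = ℓ} := by
          rw [hcard1, Finset.mul_sum]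
      _ = ∑ _ℓ : L, (q - 1) * qFact q k := Finset.sum_congr rfl (fun ℓ _ => hstep ℓ)
      _ = (Fintype.card L) * ((q - 1) * qFact q k) := by
          rw [Finset.sum_const, smul_eq_mul, Finset.card_univ]
      _ = ((q - 1) * Nat.card L) * qFact q k := by
          rw [Nat.card_eq_fintype_card]; ring
      _ = (q ^ (k + 1) - 1) * qFact q k := by rw [hL]; rw [hlc]
      _ = qFact q (k + 1) := by
          rw [qFact, qFact, Finset.prod_range_succ]
          ring

end Lines

section Through
variable {F V : Type*} [Field F] [AddCommGroup V] [Module F V] [FiniteDimensional F V]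

noncomputable def through_equiv {n : ℕ} (hn : finrank F V = n) (U : Submodule F V)
    (hj : finrank F U ≤ n) :
    {f : Fin (n + 1) → Submodule F V //
        StrictMono f ∧ f ⟨finrank F U, by omega⟩ = U}
      ≃ {a : Fin (finrank F U + 1) → Submodule F ↥U // StrictMono a}
        × {b : Fin ((n - finrank F U) + 1) → Submodule F (V ⧸ U) // StrictMono b} := by
  set j := finrank F U with hjdef
  have hrq : finrank F (V ⧸ U) = n - j := by
    have := Submodule.finrank_quotient_add_finrank U
    rw [hn] at this
    omega
  have hUle : ∀ (f : Fin (n+1) → Submodule F V), StrictMono f → f ⟨j, by omega⟩ = U →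
      ∀ i : Fin (n+1), (i : ℕ) ≤ j → f i ≤ U := by
    intro f hf hfj i hi
    rw [← hfj]
    exact hf.monotone (by rw [Fin.le_def]; exact hi)
  have hUge : ∀ (f : Fin (n+1) → Submodule F V), StrictMono f → f ⟨j, by omega⟩ = U →
      ∀ i : Fin (n+1), j ≤ (i : ℕ) → U ≤ f i := by
    intro f hf hfj i hi
    rw [← hfj]
    exact hf.monotone (by rw [Fin.le_def]; exact hi)
  refine ⟨fun f => (⟨fun i => comap U.subtype (f.1 ⟨i, by omega⟩), ?_⟩,
                    ⟨fun i => map U.mkQ (f.1 ⟨j + i, by omega⟩), ?_⟩),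
          fun ab => ⟨fun i => if h : (i : ℕ) ≤ j then map U.subtype (ab.1.1 ⟨i, by omega⟩)
            else comap U.mkQ (ab.2.1 ⟨(i : ℕ) - j, by omega⟩), ?_, ?_⟩, ?_, ?_⟩
  · intro i i' hii
    exact comap_subtype_lt (hUle f.1 f.2.1 f.2.2 _ (Nat.le_of_lt_succ i.2))
      (hUle f.1 f.2.1 f.2.2 _ (Nat.le_of_lt_succ i'.2))
      (f.2.1 (by rw [Fin.lt_def]; exact hii))
  · intro i i' hii
    refine map_mkQ_lt (hUge f.1 f.2.1 f.2.2 _ (by simp)) (f.2.1 ?_)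
    rw [Fin.lt_def]
    have : (i : ℕ) < i' := hii
    simp only []
    omega
  · intro i i' hii
    have hii' : (i : ℕ) < (i' : ℕ) := hii
    by_cases hi : (i : ℕ) ≤ j
    · by_cases hi' : (i' : ℕ) ≤ j
      · simp only [dif_pos hi, dif_pos hi']
        have h5 := (Submodule.MapSubtype.orderEmbedding U).strictMono
          (show ab.1.1 (⟨(i : ℕ), by omega⟩ : Fin (j+1)) < ab.1.1 ⟨(i' : ℕ), by omega⟩ from
            ab.1.2 (by rw [Fin.lt_def]; exact hii'))
        rwa [Submodule.map_subtype_embedding_eq, Submodule.map_subtype_embedding_eq] at h5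
      · simp only [dif_pos hi, dif_neg hi']
        have h1 : map U.subtype (ab.1.1 ⟨(i : ℕ), by omega⟩) ≤ U := Submodule.map_subtype_le _ _
        have hb0 : ab.2.1 0 = ⊥ := by
          have := flag_rank hrq ab.2.2 0
          simpa [Submodule.finrank_eq_zero] using this
        have h2 : U < comap U.mkQ (ab.2.1 ⟨(i' : ℕ) - j, by omega⟩) := by
          have hlt : ab.2.1 0 < ab.2.1 ⟨(i' : ℕ) - j, by omega⟩ := by
            apply ab.2.2
            rw [Fin.lt_def]
            simp only [Fin.val_zero]
            omega
          have hmm := Subtype.coe_lt_coe.mpr ((Submodule.comapMkQRelIso U).strictMono hlt)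
          rw [show ((Submodule.comapMkQRelIso U) (ab.2.1 0) : Submodule F V)
              = comap U.mkQ (ab.2.1 0) from rfl] at hmm
          rwa [hb0, Submodule.comap_bot, Submodule.ker_mkQ] at hmm
        exact lt_of_le_of_lt h1 h2
    · by_cases hi' : (i' : ℕ) ≤ j
      · omega
      · simp only [dif_neg hi, dif_neg hi']
        have hlt : ab.2.1 ⟨(i : ℕ) - j, by omega⟩ < ab.2.1 ⟨(i' : ℕ) - j, by omega⟩ := by
          apply ab.2.2
          rw [Fin.lt_def]
          simp only []
          omega
        exact Subtype.coe_lt_coe.mpr ((Submodule.comapMkQRelIso U).strictMono hlt)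
  · simp only [dif_pos (le_refl j)]
    have ha : ab.1.1 ⟨j, by omega⟩ = ⊤ := by
      have := flag_rank (rfl : finrank F ↥U = j) ab.1.2 ⟨j, by omega⟩
      exact Submodule.eq_top_of_finrank_eq (by simpa using this)
    rw [dif_pos (le_of_eq hjdef.symm)]; erw [ha]
    exact Submodule.map_subtype_top U
  · intro f
    apply Subtype.ext
    funext i
    show (if h : (i : ℕ) ≤ j then map U.subtype (comap U.subtype (f.1 ⟨(i : ℕ), by omega⟩))
        else comap U.mkQ (map U.mkQ (f.1 ⟨j + ((i : ℕ) - j), by omega⟩))) = f.1 i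
    by_cases hi : (i : ℕ) ≤ j
    · rw [dif_pos hi, Submodule.map_comap_subtype]
      have heq : (⟨(i : ℕ), by omega⟩ : Fin (n+1)) = i := by ext; rfl
      rw [heq, inf_eq_right.mpr (hUle f.1 f.2.1 f.2.2 i hi)]
    · rw [dif_neg hi]
      have heq : (⟨j + ((i : ℕ) - j), by omega⟩ : Fin (n+1)) = i := by
        ext
        simp only []
        omega
      rw [heq, Submodule.comap_map_mkQ,
        sup_eq_right.mpr (hUge f.1 f.2.1 f.2.2 i (by omega))]
  · intro ab
    have ha : ab.1.1 ⟨j, by omega⟩ = ⊤ := by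
      have := flag_rank (rfl : finrank F ↥U = j) ab.1.2 ⟨j, by omega⟩
      exact Submodule.eq_top_of_finrank_eq (by simpa using this)
    have hb0 : ab.2.1 0 = ⊥ := by
      have := flag_rank hrq ab.2.2 0
      simpa [Submodule.finrank_eq_zero] using this
    ext1
    · apply Subtype.ext
      funext i
      show comap U.subtype (if h : (i : ℕ) ≤ j
          then map U.subtype (ab.1.1 ⟨(i : ℕ), by omega⟩)
          else comap U.mkQ (ab.2.1 ⟨(i : ℕ) - j, by omega⟩))
        = ab.1.1 i
      rw [dif_pos (Nat.le_of_lt_succ i.2)]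
      have heq : (⟨(i : ℕ), by omega⟩ : Fin (j+1)) = i := by ext; rfl
      rw [heq, Submodule.comap_map_eq, Submodule.ker_subtype, sup_bot_eq]
    · apply Subtype.ext
      funext i
      show map U.mkQ (if h : j + (i : ℕ) ≤ j
          then map U.subtype (ab.1.1 ⟨j + (i : ℕ), by omega⟩)
          else comap U.mkQ (ab.2.1 ⟨j + (i : ℕ) - j, by omega⟩))
        = ab.2.1 i
      by_cases hi : (i : ℕ) = 0
      · rw [dif_pos (by omega)]
        have heq : (⟨j + (i : ℕ), by omega⟩ : Fin (j+1)) = ⟨j, by omega⟩ := by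
          ext
          simp only []
          omega
        rw [heq, ha, Submodule.map_subtype_top]
        have hieq : i = (0 : Fin (n - j + 1)) := by ext; exact hi
        rw [hieq, hb0]
        ext x
        simp only [Submodule.mem_map, Submodule.mem_bot]
        constructor
        · rintro ⟨y, hy, rfl⟩
          simpa [Submodule.Quotient.mk_eq_zero, Submodule.mkQ_apply] using hy
        · rintro rfl
          exact ⟨0, U.zero_mem, map_zero _⟩
      · rw [dif_neg (by omega)]
        have heq : (⟨j + (i : ℕ) - j, by omega⟩ : Fin (n - j + 1)) = i := by
          ext
          simp only []
          omega
        rw [heq, Submodule.map_comap_eq, Submodule.range_mkQ, top_inf_eq]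

end Through

section LYM
variable {F V : Type*} [Field F] [Fintype F] [AddCommGroup V] [Module F V]
  [FiniteDimensional F V]

lemma chain_inner {n l : ℕ} (𝒜 : Finset (Submodule F V))
    (hcf : ChainFree l (𝒜 : Set (Submodule F V)))
    {f : Fin (n + 1) → Submodule F V} (hf : StrictMono f)
    [DecidablePred fun U : Submodule F V => U ∈ Set.range f] :
    (𝒜.filter (fun U => U ∈ Set.range f)).card ≤ l := by
  classical
  by_contra hcon
  push_neg at hcon
  have himg : 𝒜.filter (fun U => U ∈ Set.range f)
      = (Finset.univ.filter (fun i => f i ∈ 𝒜)).image f := by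
    ext U
    simp only [Finset.mem_filter, Finset.mem_image, Finset.mem_univ, true_and, Set.mem_range]
    constructor
    · rintro ⟨hU, i, rfl⟩
      exact ⟨i, hU, rfl⟩
    · rintro ⟨i, hU, rfl⟩
      exact ⟨hU, i, rfl⟩
  rw [himg, Finset.card_image_of_injective _ hf.injective] at hcon
  obtain ⟨t, hts, htcard⟩ := Finset.exists_subset_card_eq (show l + 1 ≤ _ from hcon)
  refine hcf ⟨fun i => f (t.orderEmbOfFin htcard i), ?_, ?_⟩
  · exact hf.comp (t.orderEmbOfFin htcard).strictMono
  · intro i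
    have := hts (t.orderEmbOfFin_mem htcard i)
    exact (Finset.mem_filter.mp this).2

lemma lym_nat {n l : ℕ} (hn : finrank F V = n)
    (𝒜 : Finset (Submodule F V)) (hcf : ChainFree l (𝒜 : Set (Submodule F V))) :
    ∑ U ∈ 𝒜, qFact (Fintype.card F) (finrank F U) * qFact (Fintype.card F) (n - finrank F U)
      ≤ l * qFact (Fintype.card F) n := by
  classical
  have hfinW : Finite V := Module.finite_of_finite F
  have hfinS : Finite (Submodule F V) := finite_submodule F V
  obtain ⟨instS⟩ := nonempty_fintype (Submodule F V)
  have hjle : ∀ U : Submodule F V, finrank F U ≤ n := by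
    intro U
    rw [← hn]
    exact Submodule.finrank_le U
  set Fl : Finset (Fin (n+1) → Submodule F V) := Finset.univ.filter StrictMono with hFl
  have stepA : ∀ U : Submodule F V, (Fintype.card F - 1)^n *
      (Fl.filter (fun f => f ⟨finrank F U, Nat.lt_succ_of_le (hjle U)⟩ = U)).card
      = qFact (Fintype.card F) (finrank F U) * qFact (Fintype.card F) (n - finrank F U) := by
    intro U
    have e2 : finrank F (V ⧸ U) = n - finrank F U := by
      have h9 := Submodule.finrank_quotient_add_finrank U
      rw [hn] at h9
      have h8 := hjle U
      omega
    have hpow : (Fintype.card F - 1)^n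
        = (Fintype.card F - 1)^(finrank F U) * (Fintype.card F - 1)^(n - finrank F U) := by
      rw [← pow_add]
      congr 1
      have h8 := hjle U
      omega
    have e1 := flag_count F (finrank F U) ↥U rfl
    have e3 := flag_count F (n - finrank F U) (V ⧸ U) e2
    have h1 : (Fl.filter (fun f => f ⟨finrank F U, Nat.lt_succ_of_le (hjle U)⟩ = U)).card
        = Nat.card {f : Fin (n+1) → Submodule F V //
            StrictMono f ∧ f ⟨finrank F U, Nat.lt_succ_of_le (hjle U)⟩ = U} := by
      rw [hFl, Finset.filter_filter]
      exact card_filter_univ_eq_nat_card _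
    rw [h1, Nat.card_congr (through_equiv hn U (hjle U)), Nat.card_prod]
    calc (Fintype.card F - 1)^n *
          (Nat.card {a : Fin (finrank F U + 1) → Submodule F ↥U // StrictMono a}
          * Nat.card {b : Fin ((n - finrank F U) + 1) → Submodule F (V ⧸ U) // StrictMono b})
        = ((Fintype.card F - 1)^(finrank F U)
            * Nat.card {a : Fin (finrank F U + 1) → Submodule F ↥U // StrictMono a})
          * ((Fintype.card F - 1)^(n - finrank F U)
            * Nat.card {b : Fin ((n - finrank F U) + 1) → Submodule F (V ⧸ U) // StrictMono b}) := by
          rw [hpow]; ring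
      _ = qFact (Fintype.card F) (finrank F U) * qFact (Fintype.card F) (n - finrank F U) := by
          rw [e1, e3]
  have stepB : ∑ U ∈ 𝒜,
      (Fl.filter (fun f => f ⟨finrank F U, Nat.lt_succ_of_le (hjle U)⟩ = U)).card
      ≤ l * Fl.card := by
    have hiff : ∀ U ∈ 𝒜, ∀ f ∈ Fl,
        (f ⟨finrank F U, Nat.lt_succ_of_le (hjle U)⟩ = U ↔ U ∈ Set.range f) := by
      intro U _ f hf
      have hsm : StrictMono f := (Finset.mem_filter.mp hf).2
      constructor
      · intro h
        exact ⟨_, h⟩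
      · rintro ⟨i, rfl⟩
        have := flag_rank hn hsm i
        congr 1
        ext
        simpa using this
    calc ∑ U ∈ 𝒜, (Fl.filter (fun f => f ⟨finrank F U, Nat.lt_succ_of_le (hjle U)⟩ = U)).card
        = ∑ U ∈ 𝒜, (Fl.filter (fun f => U ∈ Set.range f)).card := by
          refine Finset.sum_congr rfl (fun U hU => ?_)
          rw [Finset.filter_congr (hiff U hU)]
      _ = ∑ U ∈ 𝒜, ∑ f ∈ Fl, if U ∈ Set.range f then 1 else 0 :=
          Finset.sum_congr rfl (fun U _ => Finset.card_filter _ _)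
      _ = ∑ f ∈ Fl, ∑ U ∈ 𝒜, if U ∈ Set.range f then 1 else 0 := Finset.sum_comm
      _ = ∑ f ∈ Fl, (𝒜.filter (fun U => U ∈ Set.range f)).card :=
          Finset.sum_congr rfl (fun f _ => (Finset.card_filter _ _).symm)
      _ ≤ ∑ _f ∈ Fl, l := by
          refine Finset.sum_le_sum (fun f hf => ?_)
          exact chain_inner 𝒜 hcf (Finset.mem_filter.mp hf).2
      _ = l * Fl.card := by
          rw [Finset.sum_const, smul_eq_mul, mul_comm]
  have stepC : (Fintype.card F - 1)^n * Fl.card = qFact (Fintype.card F) n := by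
    have : Fl.card = Nat.card {f : Fin (n+1) → Submodule F V // StrictMono f} := by
      rw [hFl]
      exact card_filter_univ_eq_nat_card _
    rw [this]
    exact flag_count F n V hn
  calc ∑ U ∈ 𝒜, qFact (Fintype.card F) (finrank F U) * qFact (Fintype.card F) (n - finrank F U)
      = ∑ U ∈ 𝒜, (Fintype.card F - 1)^n *
          (Fl.filter (fun f => f ⟨finrank F U, Nat.lt_succ_of_le (hjle U)⟩ = U)).card :=
        Finset.sum_congr rfl (fun U _ => (stepA U).symm)
    _ = (Fintype.card F - 1)^n * ∑ U ∈ 𝒜,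
          (Fl.filter (fun f => f ⟨finrank F U, Nat.lt_succ_of_le (hjle U)⟩ = U)).card := by
        rw [Finset.mul_sum]
    _ ≤ (Fintype.card F - 1)^n * (l * Fl.card) := Nat.mul_le_mul_left _ stepB
    _ = l * ((Fintype.card F - 1)^n * Fl.card) := by ring
    _ = l * qFact (Fintype.card F) n := by rw [stepC]

end LYM

section Select

lemma exists_top_subset (b : ℕ → ℚ) :
    ∀ (l : ℕ) (S : Finset ℕ), ∃ T ⊆ S, T.card = min l S.card ∧
      ∀ j ∈ T, ∀ k ∈ S \ T, b k ≤ b j := by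
  intro l
  induction l with
  | zero =>
    intro S
    exact ⟨∅, Finset.empty_subset _, by simp, by simp⟩
  | succ l ih =>
    intro S
    rcases S.eq_empty_or_nonempty with rfl | hS
    · exact ⟨∅, Finset.empty_subset _, by simp, by simp⟩
    · obtain ⟨j₀, hj₀S, hj₀max⟩ := S.exists_max_image b hS
      obtain ⟨T', hT'sub, hT'card, hT'max⟩ := ih (S.erase j₀)
      refine ⟨insert j₀ T', ?_, ?_, ?_⟩
      · intro x hx
        rcases Finset.mem_insert.mp hx with rfl | hx
        · exact hj₀S
        · exact (Finset.erase_subset _ _) (hT'sub hx)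
      · have hj₀T' : j₀ ∉ T' := fun h => (Finset.notMem_erase j₀ S) (hT'sub h)
        rw [Finset.card_insert_of_notMem hj₀T', hT'card, Finset.card_erase_of_mem hj₀S]
        have : 1 ≤ S.card := Finset.card_pos.mpr hS
        omega
      · intro j hj k hk
        have hkS : k ∈ S := (Finset.mem_sdiff.mp hk).1
        have hkT : k ∉ insert j₀ T' := (Finset.mem_sdiff.mp hk).2
        rcases Finset.mem_insert.mp hj with rfl | hjT'
        · exact hj₀max k hkS
        · apply hT'max j hjT'
          rw [Finset.mem_sdiff]
          constructor
          · refine Finset.mem_erase.mpr ⟨?_, hkS⟩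
            intro h
            exact hkT (h ▸ Finset.mem_insert_self _ _)
          · intro h
            exact hkT (Finset.mem_insert_of_mem h)

lemma select_lemma (S : Finset ℕ) (b d : ℕ → ℚ) (l : ℕ)
    (hb : ∀ j ∈ S, 0 < b j) (hd0 : ∀ j ∈ S, 0 ≤ d j) (hdb : ∀ j ∈ S, d j ≤ b j)
    (hsum : ∑ j ∈ S, d j / b j ≤ l) :
    ∃ T ⊆ S, T.card ≤ l ∧ ∑ j ∈ S, d j ≤ ∑ j ∈ T, b j := by
  rcases Nat.eq_zero_or_pos l with rfl | hl
  · refine ⟨∅, Finset.empty_subset _, le_refl _, ?_⟩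
    have hz : ∀ j ∈ S, d j / b j = 0 := by
      intro j hj
      have h1 : ∀ i ∈ S, 0 ≤ d i / b i := fun i hi => div_nonneg (hd0 i hi) (hb i hi).le
      have h2 : ∑ j ∈ S, d j / b j = 0 := le_antisymm (by exact_mod_cast hsum)
        (Finset.sum_nonneg h1)
      exact (Finset.sum_eq_zero_iff_of_nonneg h1).mp h2 j hj
    have : ∀ j ∈ S, d j = 0 := by
      intro j hj
      have := hz j hj
      field_simp [(hb j hj).ne'] at this
      simpa using this
    rw [Finset.sum_congr rfl this]
    simp
  obtain ⟨T, hTS, hTcard, hTmax⟩ := exists_top_subset b l S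
  refine ⟨T, hTS, le_trans (le_of_eq hTcard) (min_le_left _ _), ?_⟩
  by_cases hcase : S.card ≤ l
  · have hTeq : T = S := Finset.eq_of_subset_of_card_le hTS (by rw [hTcard]; omega)
    rw [hTeq]
    exact Finset.sum_le_sum hdb
  · push_neg at hcase
    have hTcard' : T.card = l := by rw [hTcard]; omega
    have hTne : T.Nonempty := Finset.card_pos.mp (by omega)
    obtain ⟨jm, hjmT, hjmmin⟩ := T.exists_min_image b hTne
    have hm0 : 0 < b jm := hb jm (hTS hjmT)
    have hsplit : ∑ j ∈ S \ T, d j + ∑ j ∈ T, d j = ∑ j ∈ S, d j := Finset.sum_sdiff hTS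
    have hsplitw : ∑ j ∈ S \ T, d j / b j + ∑ j ∈ T, d j / b j = ∑ j ∈ S, d j / b j :=
      Finset.sum_sdiff hTS
    have key : ∑ j ∈ S \ T, d j ≤ ∑ j ∈ T, b j - ∑ j ∈ T, d j := by
      have c1 : ∑ j ∈ S \ T, d j ≤ (∑ j ∈ S \ T, d j / b j) * b jm := by
        rw [Finset.sum_mul]
        refine Finset.sum_le_sum (fun j hj => ?_)
        have hjS : j ∈ S := (Finset.mem_sdiff.mp hj).1
        have hbj : 0 < b j := hb j hjS
        have hble : b j ≤ b jm := hTmax jm hjmT j hj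
        calc d j = d j / b j * b j := by field_simp
          _ ≤ d j / b j * b jm :=
            mul_le_mul_of_nonneg_left hble (div_nonneg (hd0 j hjS) hbj.le)
      have c2 : (∑ j ∈ S \ T, d j / b j) * b jm ≤ (l - ∑ j ∈ T, d j / b j) * b jm := by
        refine mul_le_mul_of_nonneg_right ?_ hm0.le
        have := hsplitw
        linarith
      have c3 : ((l : ℚ) - ∑ j ∈ T, d j / b j) * b jm = (∑ j ∈ T, (1 - d j / b j)) * b jm := by
        congr 1
        rw [Finset.sum_sub_distrib]
        simp [hTcard']
      have c4 : (∑ j ∈ T, (1 - d j / b j)) * b jm ≤ ∑ j ∈ T, (1 - d j / b j) * b j := by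
        rw [Finset.sum_mul]
        refine Finset.sum_le_sum (fun j hj => ?_)
        have hjS : j ∈ S := hTS hj
        have hbj : 0 < b j := hb j hjS
        have h1 : 0 ≤ 1 - d j / b j := by
          have : d j / b j ≤ 1 := (div_le_one hbj).mpr (hdb j hjS)
          linarith
        exact mul_le_mul_of_nonneg_left (hjmmin j hj) h1
      have c5 : ∑ j ∈ T, (1 - d j / b j) * b j = ∑ j ∈ T, b j - ∑ j ∈ T, d j := by
        rw [← Finset.sum_sub_distrib]
        refine Finset.sum_congr rfl (fun j hj => ?_)
        have hbj : 0 < b j := hb j (hTS hj)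
        field_simp
      linarith
    linarith

end Select

end Aux

/-- Rota–Harper theorem: an `l`-chain-free family `𝒜` of subspaces of an `n`-dimensional
vector space over `F_q` has size at most the sum of the `l` largest Gaussian binomial
coefficients `[n choose j]_q`, `0 ≤ j ≤ n`. -/
theorem rota_harper (q n l : ℕ) (F : Type*) [Field F] [Fintype F]
    (hq : Fintype.card F = q) (V : Type*) [AddCommGroup V] [Module F V]
    [FiniteDimensional F V] (hn : Module.finrank F V = n)
    (𝒜 : Finset (Submodule F V)) (hcf : ChainFree l (𝒜 : Set (Submodule F V))) :
    ∃ T ⊆ Finset.range (n + 1), T.card ≤ l ∧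
      (𝒜.card : ℚ) ≤ ∑ j ∈ T, gaussBinom q n j := by
  classical
  subst hq
  set q := Fintype.card F with hq
  have hq2 : 2 ≤ q := Fintype.one_lt_card
  have hqf_pos : ∀ m, 0 < qFact q m := by
    intro m
    refine Finset.prod_pos (fun i _ => ?_)
    have : q ≤ q ^ (i + 1) := Nat.le_self_pow (by omega) q
    omega
  have hjle : ∀ U : Submodule F V, Module.finrank F ↥U ≤ n := by
    intro U
    rw [← hn]
    exact Submodule.finrank_le U
  set d : ℕ → ℕ := fun j => (𝒜.filter (fun U : Submodule F V => Module.finrank F ↥U = j)).card with hd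
  -- partition of 𝒜 by dimension
  have hcardsum : 𝒜.card = ∑ j ∈ Finset.range (n + 1), d j := by
    exact Finset.card_eq_sum_card_fiberwise
      (f := fun U : Submodule F V => Module.finrank F ↥U) (t := Finset.range (n + 1))
      (fun U hU => Finset.mem_range.mpr (Nat.lt_succ_of_le (hjle U)))
  -- grouped LYM for 𝒜
  have hlym := lym_nat hn 𝒜 hcf
  have hgroup : ∑ U ∈ 𝒜, qFact q (Module.finrank F ↥U) * qFact q (n - Module.finrank F ↥U)
      = ∑ j ∈ Finset.range (n + 1), d j * (qFact q j * qFact q (n - j)) := by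
    rw [← Finset.sum_fiberwise_of_maps_to
      (g := fun U : Submodule F V => Module.finrank F ↥U)
      (fun U hU => Finset.mem_range.mpr (Nat.lt_succ_of_le (hjle U)))
      (fun U => qFact q (Module.finrank F ↥U) * qFact q (n - Module.finrank F ↥U))]
    refine Finset.sum_congr rfl (fun j _ => ?_)
    have hc : ∀ U ∈ 𝒜.filter (fun U : Submodule F V => Module.finrank F ↥U = j),
        qFact q (Module.finrank F ↥U) * qFact q (n - Module.finrank F ↥U)
          = qFact q j * qFact q (n - j) := by
      intro U hU
      rw [(Finset.mem_filter.mp hU).2]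
    rw [Finset.sum_congr rfl hc, Finset.sum_const, smul_eq_mul]
  have hlym2 : ∑ j ∈ Finset.range (n + 1), d j * (qFact q j * qFact q (n - j))
      ≤ l * qFact q n := hgroup ▸ hlym
  -- level sets are 1-chain-free
  have hlevel : ∀ j, d j * (qFact q j * qFact q (n - j)) ≤ qFact q n := by
    intro j
    have hcf1 : ChainFree 1 ((𝒜.filter (fun U : Submodule F V => Module.finrank F ↥U = j)) :
        Set (Submodule F V)) := by
      rintro ⟨c, hmono, hmem⟩
      have h0 := hmem 0
      have h1 := hmem 1
      rw [Finset.coe_filter, Set.mem_setOf_eq] at h0 h1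
      have hlt : c 0 < c 1 := hmono (by norm_num [Fin.lt_def])
      have := Submodule.finrank_lt_finrank_of_lt hlt
      rw [h0.2, h1.2] at this
      omega
    have hly := lym_nat hn (𝒜.filter (fun U : Submodule F V => Module.finrank F ↥U = j)) hcf1
    rw [one_mul] at hly
    calc d j * (qFact q j * qFact q (n - j))
        = ∑ U ∈ 𝒜.filter (fun U : Submodule F V => Module.finrank F ↥U = j),
            qFact q (Module.finrank F ↥U) * qFact q (n - Module.finrank F ↥U) := by
          have hc : ∀ U ∈ 𝒜.filter (fun U : Submodule F V => Module.finrank F ↥U = j),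
              qFact q (Module.finrank F ↥U) * qFact q (n - Module.finrank F ↥U)
                = qFact q j * qFact q (n - j) := by
            intro U hU
            rw [(Finset.mem_filter.mp hU).2]
          rw [Finset.sum_congr rfl hc, Finset.sum_const, smul_eq_mul]
      _ ≤ qFact q n := hly
  -- move to ℚ and apply the selection lemma
  have hbpos : ∀ j ∈ Finset.range (n + 1), (0 : ℚ) < gaussBinom q n j := by
    intro j hj
    rw [gaussBinom]
    have h1 : (0:ℚ) < qFact q n := by exact_mod_cast hqf_pos n
    have h2 : (0:ℚ) < qFact q j := by exact_mod_cast hqf_pos j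
    have h3 : (0:ℚ) < qFact q (n - j) := by exact_mod_cast hqf_pos (n - j)
    positivity
  have hdivrw : ∀ j ∈ Finset.range (n + 1),
      (d j : ℚ) / gaussBinom q n j
        = (d j * (qFact q j * qFact q (n - j)) : ℕ) / (qFact q n : ℚ) := by
    intro j hj
    rw [gaussBinom, div_div_eq_mul_div]
    push_cast
    ring
  have hsum : ∑ j ∈ Finset.range (n + 1), (d j : ℚ) / gaussBinom q n j ≤ l := by
    rw [Finset.sum_congr rfl hdivrw, ← Finset.sum_div]
    rw [div_le_iff₀ (by exact_mod_cast hqf_pos n)]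
    push_cast
    exact_mod_cast hlym2
  have hdb : ∀ j ∈ Finset.range (n + 1), (d j : ℚ) ≤ gaussBinom q n j := by
    intro j hj
    rw [gaussBinom, le_div_iff₀ (by
      have h2 : (0:ℚ) < qFact q j := by exact_mod_cast hqf_pos j
      have h3 : (0:ℚ) < qFact q (n - j) := by exact_mod_cast hqf_pos (n - j)
      positivity)]
    exact_mod_cast hlevel j
  obtain ⟨T, hTS, hTcard, hTle⟩ := select_lemma (Finset.range (n + 1))
    (fun j => gaussBinom q n j) (fun j => (d j : ℚ)) l hbpos
    (fun j _ => Nat.cast_nonneg _) hdb hsum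
  refine ⟨T, hTS, hTcard, ?_⟩
  calc (𝒜.card : ℚ) = ∑ j ∈ Finset.range (n + 1), (d j : ℚ) := by
        rw [hcardsum]; push_cast; rfl
    _ ≤ ∑ j ∈ T, gaussBinom q n j := hTle
end

section
/- Under the hypotheses of the Meshalkin theorem for projective geometries (M a family of Meshalkin sequences of length p ≥ 2 in PG(n-1,q), each M_k for k < p containing no chain of length l), |M| is at most the sum of the l^{p-1} largest quantities [n; α]_q · q^{s_2(α)} over all nonnegative integer sequences α = (α_1,…,α_p) with α_1 + ⋯ + α_p = n. -/
open Finset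

section MeshalkinAux
set_option linter.unusedSectionVars false

namespace MK

lemma sq_sum {p : ℕ} (α : Fin p → ℕ) :
    ∑ k, α k * α k + 2 * s2 α = (∑ k, α k) * (∑ k, α k) := by
  rw [Finset.sum_mul_sum]
  have hsplit : ∀ i : Fin p, ∑ j, α i * α j =
      (∑ j ∈ Finset.univ.filter (fun j : Fin p => i < j), α i * α j)
      + (α i * α i + ∑ j ∈ Finset.univ.filter (fun j : Fin p => j < i), α i * α j) := by
    intro i
    rw [← Finset.sum_filter_add_sum_filter_not Finset.univ (fun j : Fin p => i < j)]
    congr 1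
    have : Finset.univ.filter (fun j : Fin p => ¬ i < j)
        = insert i (Finset.univ.filter (fun j : Fin p => j < i)) := by
      ext j
      simp only [Finset.mem_filter, Finset.mem_univ, true_and, Finset.mem_insert, not_lt]
      constructor
      · intro h
        rcases eq_or_lt_of_le h with h' | h'
        · exact Or.inl h'
        · exact Or.inr h'
      · rintro (rfl | h)
        · exact le_refl _
        · exact le_of_lt h
    rw [this, Finset.sum_insert (by simp)]
  rw [Finset.sum_congr rfl (fun i _ => hsplit i)]
  rw [Finset.sum_add_distrib, Finset.sum_add_distrib]
  have hswap : ∑ i : Fin p, ∑ j ∈ Finset.univ.filter (fun j : Fin p => j < i), α i * α j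
      = s2 α := by
    rw [s2]
    rw [Finset.sum_sigma', Finset.sum_sigma']
    refine Finset.sum_nbij' (fun x => ⟨x.2, x.1⟩) (fun x => ⟨x.2, x.1⟩) ?_ ?_ ?_ ?_ ?_
    · rintro ⟨i, j⟩ h
      simp only [Finset.mem_sigma, Finset.mem_filter, Finset.mem_univ, true_and] at h ⊢
      exact h
    · rintro ⟨i, j⟩ h
      simp only [Finset.mem_sigma, Finset.mem_filter, Finset.mem_univ, true_and] at h ⊢
      exact h
    · rintro ⟨i, j⟩ _; rfl
    · rintro ⟨i, j⟩ _; rfl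
    · rintro ⟨i, j⟩ _; exact Nat.mul_comm _ _
  rw [hswap, s2]
  ring

lemma two_e (m : ℕ) : 2 * (∑ i ∈ range m, i) + m = m * m := by
  have := Finset.sum_range_id_mul_two m
  cases m with
  | zero => simp
  | succ s =>
    have h : (∑ i ∈ range (s+1), i) * 2 = (s+1) * s := by
      rw [this]; simp
    nlinarith [h]
    
lemma e_sum {p : ℕ} (α : Fin p → ℕ) :
    ∑ k, (∑ i ∈ range (α k), i) + s2 α = ∑ i ∈ range (∑ k, α k), i := by
  have h1 := sq_sum α
  set n := ∑ k, α k with hn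
  have h2 : 2 * (∑ i ∈ range n, i) + n = n * n := two_e n
  have h3 : ∀ k : Fin p, 2 * (∑ i ∈ range (α k), i) + α k = α k * α k := fun k => two_e (α k)
  have h4 : 2 * (∑ k, (∑ i ∈ range (α k), i)) + n
      = ∑ k, α k * α k := by
    rw [hn, Finset.mul_sum, ← Finset.sum_add_distrib]
    exact Finset.sum_congr rfl (fun k _ => h3 k)
  omega

end MK

namespace MK2
open Finset

lemma prod_pow_sub (q m : ℕ) (hq : 1 ≤ q) :
    ∏ i ∈ range m, (q ^ m - q ^ i) = q ^ (∑ i ∈ range m, i) * qFact q m := by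
  have h1 : ∀ i ∈ range m, q ^ m - q ^ i = q ^ i * (q ^ (m - i) - 1) := by
    intro i hi
    rw [mem_range] at hi
    have h2 : q ^ i * q ^ (m - i) = q ^ m := by
      rw [← pow_add]; congr 1; omega
    have h3 : 1 ≤ q ^ (m - i) := Nat.one_le_pow _ _ (by omega)
    have h4 : q ^ i * (q ^ (m - i) - 1) + q ^ i = q ^ i * q ^ (m - i) := by
      rw [Nat.mul_sub, Nat.mul_one, Nat.sub_add_cancel]
      exact Nat.le_mul_of_pos_right _ (by positivity)
    omega
  rw [Finset.prod_congr rfl h1, Finset.prod_mul_distrib, Finset.prod_pow_eq_pow_sum]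
  congr 1
  have h5 : ∀ j ∈ range m, q ^ (m - j) - 1 = (fun i => q ^ (i + 1) - 1) (m - 1 - j) := by
    intro j hj; rw [mem_range] at hj; simp only []; congr 2; omega
  rw [Finset.prod_congr rfl h5, qFact]
  exact Finset.prod_range_reflect (fun i => q ^ (i + 1) - 1) m

lemma qFact_pos (q m : ℕ) (hq : 2 ≤ q) : 0 < qFact q m := by
  apply Finset.prod_pos
  intro i _
  have : 2 ^ (i + 1) ≤ q ^ (i + 1) := Nat.pow_le_pow_left hq _
  have : 1 ≤ 2 ^ (i + 1) := Nat.one_le_two_pow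
  omega

lemma inner_pos (q m : ℕ) (hq : 2 ≤ q) : 0 < ∏ i ∈ range m, (q ^ m - q ^ i) := by
  apply Finset.prod_pos
  intro i hi
  rw [mem_range] at hi
  have := Nat.pow_lt_pow_right (by omega : 1 < q) hi
  omega

lemma key_identity (q n : ℕ) (hq : 2 ≤ q) {p : ℕ} (α : Fin p → ℕ) (hsum : ∑ k, α k = n) :
    ((∏ k, ∏ i ∈ range (α k), (q ^ (α k) - q ^ i) : ℕ) : ℚ)
        * (gaussMultinomial q n α * (q : ℚ) ^ s2 α)
      = ((∏ i ∈ range n, (q ^ n - q ^ i) : ℕ) : ℚ) := by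
  have h1 : ∀ m, ((∏ i ∈ range m, (q ^ m - q ^ i) : ℕ) : ℚ)
      = (q : ℚ) ^ (∑ i ∈ range m, i) * (qFact q m : ℚ) := by
    intro m
    rw [prod_pow_sub q m (by omega)]
    push_cast
    ring
  have h2 : ((∏ k, ∏ i ∈ range (α k), (q ^ (α k) - q ^ i) : ℕ) : ℚ)
      = (q : ℚ) ^ (∑ k, ∑ i ∈ range (α k), i) * ∏ k, (qFact q (α k) : ℚ) := by
    rw [Nat.cast_prod]
    rw [Finset.prod_congr rfl (fun k _ => h1 (α k)), Finset.prod_mul_distrib,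
      Finset.prod_pow_eq_pow_sum]
  have hne : (∏ k, (qFact q (α k) : ℚ)) ≠ 0 := by
    apply Finset.prod_ne_zero_iff.2
    intro k _
    exact_mod_cast (qFact_pos q (α k) hq).ne'
  have hE := MK.e_sum α
  rw [hsum] at hE
  rw [h2, h1 n, gaussMultinomial, ← hE, pow_add]
  field_simp

lemma exists_top {I : Type*} [DecidableEq I] (f : I → ℚ) :
    ∀ (L : ℕ) (s : Finset I), ∃ T, T ⊆ s ∧ T.card = min L s.card ∧
      ∀ x ∈ T, ∀ y ∈ s \ T, f y ≤ f x := by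
  intro L
  induction L with
  | zero => intro s; exact ⟨∅, Finset.empty_subset _, by simp, by simp⟩
  | succ L ih =>
    intro s
    by_cases hs : s.card ≤ L + 1
    · refine ⟨s, Finset.Subset.refl s, ?_, by simp⟩
      rw [min_eq_right hs]
    · have hne : s.Nonempty := by rw [← Finset.card_pos]; omega
      obtain ⟨m, hm, hmax⟩ := Finset.exists_max_image s f hne
      obtain ⟨T', hT's, hT'card, hT'max⟩ := ih (s.erase m)
      have hmT' : m ∉ T' := fun h => Finset.notMem_erase m s (hT's h)
      refine ⟨insert m T', ?_, ?_, ?_⟩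
      · intro x hx
        rcases Finset.mem_insert.1 hx with rfl | hx
        · exact hm
        · exact Finset.mem_of_mem_erase (hT's hx)
      · rw [Finset.card_insert_of_notMem hmT']
        rw [Finset.card_erase_of_mem hm] at hT'card
        have h1 : min L (s.card - 1) = L := min_eq_left (by omega)
        have h2 : min (L + 1) s.card = L + 1 := min_eq_left (by omega)
        omega
      · intro x hx y hy
        rcases Finset.mem_insert.1 hx with rfl | hx
        · exact hmax y (Finset.mem_sdiff.1 hy).1
        · apply hT'max x hx
          rw [Finset.mem_sdiff] at hy ⊢
          refine ⟨Finset.mem_erase.2 ⟨?_, hy.1⟩,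
            fun h => hy.2 (Finset.mem_insert_of_mem h)⟩
          rintro rfl
          exact hy.2 (Finset.mem_insert_self _ _)

lemma bound_lemma {I : Type*} [DecidableEq I] (s u T : Finset I) (c nn : I → ℚ) (L : ℕ)
    (hus : u ⊆ s) (hTs : T ⊆ s) (hcpos : ∀ x ∈ s, 0 < c x)
    (hnn : ∀ x ∈ u, 0 ≤ nn x) (hnc : ∀ x ∈ u, nn x ≤ c x)
    (hTcard : T.card = min L s.card)
    (hTmax : ∀ x ∈ T, ∀ y ∈ s \ T, c y ≤ c x)
    (hlym : ∑ x ∈ u, nn x / c x ≤ (L : ℚ)) :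
    ∑ x ∈ u, nn x ≤ ∑ x ∈ T, c x := by
  by_cases hempty : s \ T = ∅
  · have hTeq : T = s := by
      apply Finset.Subset.antisymm hTs
      intro x hx
      by_contra h
      have : x ∈ s \ T := Finset.mem_sdiff.2 ⟨hx, h⟩
      rw [hempty] at this
      exact absurd this (Finset.notMem_empty x)
    calc ∑ x ∈ u, nn x ≤ ∑ x ∈ u, c x := Finset.sum_le_sum hnc
      _ ≤ ∑ x ∈ s, c x :=
          Finset.sum_le_sum_of_subset_of_nonneg hus (fun x hx _ => (hcpos x hx).le)
      _ = ∑ x ∈ T, c x := by rw [hTeq]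
  · obtain ⟨ym, hym, hymax⟩ := Finset.exists_max_image (s \ T) c
      (Finset.nonempty_of_ne_empty hempty)
    set μ := c ym with hμ
    have hμpos : 0 < μ := hcpos ym (Finset.mem_sdiff.1 hym).1
    have hμle : ∀ x ∈ T, μ ≤ c x := fun x hx => hTmax x hx ym hym
    have hLcard : T.card = L := by
      have hTneq : T ≠ s := by
        rintro rfl
        rw [Finset.sdiff_self] at hempty
        exact hempty rfl
      have h1 : T.card < s.card := Finset.card_lt_card (hTs.ssubset_of_ne hTneq)
      have h2 : min L s.card = L ∨ min L s.card = s.card := min_choice _ _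
      omega
    have key : ∀ x ∈ u, nn x ≤ (nn x / c x) * μ + (if x ∈ T then c x - μ else 0) := by
      intro x hx
      have hc := hcpos x (hus hx)
      have h3 : nn x = (nn x / c x) * c x := by field_simp
      by_cases hxT : x ∈ T
      · simp only [hxT, if_pos]
        have h1 : nn x / c x ≤ 1 := by rw [div_le_one hc]; exact hnc x hx
        have h0 : 0 ≤ c x - μ := by linarith [hμle x hxT]
        have h2 : (nn x / c x) * (c x - μ) ≤ 1 * (c x - μ) :=
          mul_le_mul_of_nonneg_right h1 h0
        have h4 : (nn x / c x) * μ + (nn x / c x) * (c x - μ) = nn x := by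
          rw [← mul_add]
          have : μ + (c x - μ) = c x := by ring
          rw [this, div_mul_cancel₀ _ hc.ne']
        linarith
      · simp only [hxT, if_neg, not_false_iff, add_zero]
        have h5 : c x ≤ μ := hymax x (Finset.mem_sdiff.2 ⟨hus hx, hxT⟩)
        have h6 : 0 ≤ nn x / c x := div_nonneg (hnn x hx) hc.le
        calc nn x = (nn x / c x) * c x := h3
          _ ≤ (nn x / c x) * μ := mul_le_mul_of_nonneg_left h5 h6
    calc ∑ x ∈ u, nn x
        ≤ ∑ x ∈ u, ((nn x / c x) * μ + if x ∈ T then c x - μ else 0) :=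
          Finset.sum_le_sum key
      _ = (∑ x ∈ u, nn x / c x) * μ + ∑ x ∈ u, (if x ∈ T then c x - μ else 0) := by
          rw [Finset.sum_add_distrib, Finset.sum_mul]
      _ ≤ (L : ℚ) * μ + ∑ x ∈ T, (c x - μ) := by
          apply add_le_add
          · exact mul_le_mul_of_nonneg_right hlym hμpos.le
          · rw [Finset.sum_ite_mem]
            apply Finset.sum_le_sum_of_subset_of_nonneg (Finset.inter_subset_right)
            intro x hx _
            linarith [hμle x hx]
      _ = ∑ x ∈ T, c x := by
          rw [Finset.sum_sub_distrib, Finset.sum_const, hLcard, nsmul_eq_mul]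
          ring

end MK2

namespace MK3

variable {X : Type*} [PartialOrder X] [Finite X]

def chainP (S : Set X) (x : X) (m : ℕ) : Prop :=
  ∃ c : Fin (m + 1) → X, StrictMono c ∧ (∀ i, c i ∈ S) ∧ c (Fin.last m) = x

open scoped Classical in
noncomputable def ht (S : Set X) (x : X) : ℕ :=
  Nat.findGreatest (chainP S x) (Nat.card X)

lemma chainP_zero {S : Set X} {x : X} (hx : x ∈ S) : chainP S x 0 := by
  refine ⟨fun _ => x, ?_, fun _ => hx, rfl⟩
  intro a b hab
  rw [Fin.lt_def] at hab
  have ha := a.isLt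
  have hb := b.isLt
  omega

lemma chainP_lt_card {S : Set X} {x : X} {m : ℕ} (h : chainP S x m) : m < Nat.card X := by
  obtain ⟨c, hc, -, -⟩ := h
  have h2 : Nat.card (Fin (m + 1)) ≤ Nat.card X := Nat.card_le_card_of_injective c hc.injective
  simpa using h2

lemma strictMono_snoc {m : ℕ} (c : Fin (m + 1) → X) (y : X) (hc : StrictMono c)
    (hy : c (Fin.last m) < y) : StrictMono (Fin.snoc c y) := by
  intro a b hab
  rcases Fin.eq_castSucc_or_eq_last b with ⟨b', rfl⟩ | rfl
  · rcases Fin.eq_castSucc_or_eq_last a with ⟨a', rfl⟩ | rfl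
    · rw [Fin.snoc_castSucc, Fin.snoc_castSucc]
      exact hc (Fin.castSucc_lt_castSucc_iff.1 hab)
    · exact absurd hab (not_lt_of_gt (Fin.castSucc_lt_last b'))
  · rcases Fin.eq_castSucc_or_eq_last a with ⟨a', rfl⟩ | rfl
    · rw [Fin.snoc_castSucc, Fin.snoc_last]
      calc c a' ≤ c (Fin.last m) := hc.monotone (Fin.le_last a')
        _ < y := hy
    · exact absurd hab (lt_irrefl _)

lemma ht_spec {S : Set X} {x : X} (hx : x ∈ S) : chainP S x (ht S x) := by
  classical
  exact Nat.findGreatest_spec (Nat.zero_le _) (chainP_zero hx)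

lemma ht_strictmono {S : Set X} {x y : X} (hx : x ∈ S) (hy : y ∈ S) (hxy : x < y) :
    ht S x < ht S y := by
  classical
  obtain ⟨c, hmono, hmem, hlast⟩ := ht_spec hx
  have hP : chainP S y (ht S x + 1) := by
    refine ⟨Fin.snoc c y, strictMono_snoc c y hmono (by rw [hlast]; exact hxy), ?_, by simp⟩
    intro i
    rcases Fin.eq_castSucc_or_eq_last i with ⟨i', rfl⟩ | rfl
    · rw [Fin.snoc_castSucc]; exact hmem i'
    · rw [Fin.snoc_last]; exact hy
  have hle : ht S x + 1 ≤ Nat.card X := (chainP_lt_card hP).le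
  exact Nat.lt_of_lt_of_le (Nat.lt_succ_self _) (Nat.le_findGreatest hle hP)

lemma ht_lt {S : Set X} {x : X} {l : ℕ} (hcf : ChainFree l S) (hx : x ∈ S) :
    ht S x < l := by
  by_contra h
  push_neg at h
  obtain ⟨c, hmono, hmem, -⟩ := ht_spec hx
  have hle : l + 1 ≤ ht S x + 1 := by omega
  exact hcf ⟨fun i => c (Fin.castLE hle i),
    hmono.comp (Fin.strictMono_castLE hle), fun i => hmem _⟩

end MK3

namespace MK4
open Finset Submodule

section offsets

variable {p : ℕ} (α : Fin p → ℕ)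

def ofs (t : ℕ) : ℕ := ∑ k ∈ Finset.univ.filter (fun k : Fin p => (k : ℕ) < t), α k

lemma ofs_succ {t : ℕ} (ht : t < p) : ofs α (t + 1) = ofs α t + α ⟨t, ht⟩ := by
  rw [ofs, ofs]
  have h : Finset.univ.filter (fun k : Fin p => (k : ℕ) < t + 1)
      = insert ⟨t, ht⟩ (Finset.univ.filter (fun k : Fin p => (k : ℕ) < t)) := by
    ext k
    simp only [Finset.mem_filter, Finset.mem_univ, true_and, Finset.mem_insert, Fin.ext_iff]
    omega
  rw [h, Finset.sum_insert (by simp)]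
  omega

lemma ofs_mono {t t' : ℕ} (h : t ≤ t') : ofs α t ≤ ofs α t' := by
  apply Finset.sum_le_sum_of_subset
  intro k hk
  simp only [Finset.mem_filter, Finset.mem_univ, true_and] at hk ⊢
  omega

lemma ofs_total : ofs α p = ∑ k, α k := by
  rw [ofs]
  congr 1
  ext k
  simp [k.isLt]

lemma ofs_add_le (k : Fin p) : ofs α k + α k ≤ ∑ j, α j := by
  have h1 : ofs α ((k : ℕ) + 1) = ofs α k + α k := by
    rw [ofs_succ α k.isLt]
  rw [← h1, ← ofs_total α]
  exact ofs_mono α k.isLt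

def bemb {n : ℕ} (hsum : ∑ k, α k = n) (k : Fin p) (j : Fin (α k)) : Fin n :=
  ⟨ofs α k + j, by
    have h1 := ofs_add_le α k
    have h2 := j.isLt
    omega⟩

lemma bemb_bijective {n : ℕ} (hsum : ∑ k, α k = n) :
    Function.Bijective (fun s : Σ k : Fin p, Fin (α k) => bemb α hsum s.1 s.2) := by
  rw [Fintype.bijective_iff_injective_and_card]
  constructor
  · rintro ⟨k, j⟩ ⟨k', j'⟩ h
    simp only [bemb, Fin.mk.injEq] at h
    have hkk : k = k' := by
      by_contra hne
      have hjk := j.isLt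
      have hjk' := j'.isLt
      rcases Nat.lt_or_ge (k : ℕ) (k' : ℕ) with hlt | hge
      · have h1 : ofs α ((k : ℕ) + 1) ≤ ofs α k' := ofs_mono α hlt
        rw [ofs_succ α k.isLt] at h1
        simp only [Fin.eta] at h1
        omega
      · have hlt' : (k' : ℕ) < (k : ℕ) := by
          rcases Nat.lt_or_ge (k' : ℕ) (k : ℕ) with h' | h'
          · exact h'
          · exact absurd (Fin.ext (le_antisymm h' hge)) hne
        have h1 : ofs α ((k' : ℕ) + 1) ≤ ofs α k := ofs_mono α hlt'
        rw [ofs_succ α k'.isLt] at h1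
        simp only [Fin.eta] at h1
        omega
    subst hkk
    have : (j : ℕ) = (j' : ℕ) := by omega
    exact congrArg (Sigma.mk k) (Fin.ext this)
  · simp [Fintype.card_sigma, hsum]

end offsets

section comp

variable {F V : Type*} [Field F] [AddCommGroup V] [Module F V]

open scoped Classical in
noncomputable def Comp [Fintype V] {p n : ℕ} (α : Fin p → ℕ) (hsum : ∑ k, α k = n)
    (a : Fin p → Submodule F V) : Finset (Fin n → V) :=
  Finset.univ.filter (fun b => ∀ k, a k =
    Submodule.span F (Set.range (fun j : Fin (α k) => b (bemb α hsum k j))))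

lemma mem_comp_iff [Fintype V] {p n : ℕ} {α : Fin p → ℕ} {hsum : ∑ k, α k = n}
    {a : Fin p → Submodule F V} {b : Fin n → V} :
    b ∈ Comp α hsum a ↔ ∀ k, a k =
      Submodule.span F (Set.range (fun j : Fin (α k) => b (bemb α hsum k j))) := by
  classical
  simp [Comp]

lemma comp_span_top [Fintype V] {p n : ℕ} {α : Fin p → ℕ} {hsum : ∑ k, α k = n}
    {a : Fin p → Submodule F V} {b : Fin n → V} (hb : b ∈ Comp α hsum a)
    (hsup : (⨆ i, a i) = ⊤) : Submodule.span F (Set.range b) = ⊤ := by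
  have hmem := mem_comp_iff.1 hb
  have hrange : Set.range b = ⋃ k, Set.range (fun j : Fin (α k) => b (bemb α hsum k j)) := by
    apply Set.Subset.antisymm
    · rintro x ⟨i, rfl⟩
      obtain ⟨⟨k, j⟩, hkj⟩ := (bemb_bijective α hsum).2 i
      exact Set.mem_iUnion.2 ⟨k, ⟨j, by simpa using congrArg b hkj⟩⟩
    · intro x hx
      obtain ⟨k, j, rfl⟩ := Set.mem_iUnion.1 hx
      exact Set.mem_range_self _
  rw [hrange, Submodule.span_iUnion]
  rw [iSup_congr (fun k => (hmem k).symm)]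
  exact hsup

lemma comp_li [Fintype V] [FiniteDimensional F V] {p n : ℕ} (hn : Module.finrank F V = n)
    {α : Fin p → ℕ} {hsum : ∑ k, α k = n}
    {a : Fin p → Submodule F V} {b : Fin n → V} (hb : b ∈ Comp α hsum a)
    (hsup : (⨆ i, a i) = ⊤) : LinearIndependent F b := by
  apply linearIndependent_of_top_le_span_of_card_eq_finrank
  · rw [comp_span_top hb hsup]
  · rw [Fintype.card_fin, hn]

lemma span_coe_iff {W : Submodule F V} {m : ℕ} (f : Fin m → W) :
    Submodule.span F (Set.range f) = ⊤ ↔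
      W = Submodule.span F (Set.range (fun j => (f j : V))) := by
  have h0 : (fun j => (f j : V)) = W.subtype ∘ f := rfl
  have h1 : Submodule.span F (Set.range (fun j => (f j : V)))
      = Submodule.map W.subtype (Submodule.span F (Set.range f)) := by
    rw [h0, Set.range_comp, Submodule.span_image]
  constructor
  · intro h
    rw [h1, h, Submodule.map_subtype_top]
  · intro h
    apply Submodule.map_injective_of_injective W.injective_subtype
    rw [← h1, ← h, Submodule.map_subtype_top]

lemma li_iff_span [FiniteDimensional F V] {W : Submodule F V} {m : ℕ}
    (hm : Module.finrank F W = m) (f : Fin m → W) :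
    LinearIndependent F f ↔ Submodule.span F (Set.range f) = ⊤ := by
  constructor
  · intro h
    apply Submodule.eq_top_of_finrank_eq
    rw [finrank_span_eq_card h, Fintype.card_fin, hm]
  · intro h
    exact linearIndependent_of_top_le_span_of_card_eq_finrank (le_of_eq h.symm)
      (by rw [Fintype.card_fin, hm])

end comp
end MK4

namespace MK5
open Finset Submodule MK4

variable {F V : Type*} [Field F] [Fintype F] [AddCommGroup V] [Module F V]

noncomputable def E4 [FiniteDimensional F V] {m : ℕ} (W : Submodule F V)
    (hm : Module.finrank F W = m) :
    {g : Fin m → V // W = Submodule.span F (Set.range g)} ≃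
      {f : Fin m → W // LinearIndependent F f} where
  toFun g := ⟨fun j => ⟨g.1 j, by
      have := Submodule.subset_span (R := F) (Set.mem_range_self (f := g.1) j)
      rw [← g.2] at this
      exact this⟩, by
    rw [li_iff_span hm, span_coe_iff]
    exact g.2⟩
  invFun f := ⟨fun j => (f.1 j : V), by
    rw [← span_coe_iff]
    exact (li_iff_span hm _).1 f.2⟩
  left_inv g := by
    apply Subtype.ext
    funext j
    rfl
  right_inv f := by
    apply Subtype.ext
    funext j
    apply Subtype.ext
    rfl

lemma comp_card [Fintype V] [FiniteDimensional F V] {p n : ℕ} (hn : Module.finrank F V = n)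
    (a : Fin p → Submodule F V) (α : Fin p → ℕ) (hα : ∀ k, α k = Module.finrank F (a k))
    (hsum : ∑ k, α k = n) :
    (Comp α hsum a).card
      = ∏ k, ∏ i ∈ range (α k), (Fintype.card F ^ (α k) - Fintype.card F ^ i) := by
  classical
  rw [← Nat.card_eq_finsetCard]
  let eSig : (Σ k : Fin p, Fin (α k)) ≃ Fin n :=
    Equiv.ofBijective _ (bemb_bijective α hsum)
  let E1 : (Fin n → V) ≃ ((Σ k : Fin p, Fin (α k)) → V) :=
    Equiv.arrowCongr eSig.symm (Equiv.refl V)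
  let E2 : ((Σ k : Fin p, Fin (α k)) → V) ≃ (∀ k, Fin (α k) → V) :=
    Equiv.piCurry (fun _ _ => V)
  have hE12 : ∀ (b : Fin n → V) (k : Fin p) (j : Fin (α k)),
      ((E1.trans E2) b) k j = b (bemb α hsum k j) := by
    intro b k j
    simp only [E1, E2, eSig, Equiv.trans_apply, Equiv.arrowCongr_apply, Equiv.piCurry_apply,
      Sigma.curry, Equiv.symm_symm, Function.comp_apply, Equiv.refl_apply,
      Equiv.ofBijective_apply]
  have hiff : ∀ b : Fin n → V, b ∈ Comp α hsum a ↔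
      ∀ k, a k = Submodule.span F (Set.range (((E1.trans E2) b) k)) := by
    intro b
    rw [mem_comp_iff]
    apply forall_congr'
    intro k
    have hfun : (fun j : Fin (α k) => b (bemb α hsum k j)) = ((E1.trans E2) b) k := by
      funext j
      exact (hE12 b k j).symm
    rw [hfun]
  let EA : {b // b ∈ Comp α hsum a} ≃
      {g : ∀ k, Fin (α k) → V // ∀ k, a k = Submodule.span F (Set.range (g k))} :=
    Equiv.subtypeEquiv (E1.trans E2) hiff
  let EB : {g : ∀ k, Fin (α k) → V // ∀ k, a k = Submodule.span F (Set.range (g k))} ≃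
      ∀ k, {g : Fin (α k) → V // a k = Submodule.span F (Set.range g)} :=
    Equiv.subtypePiEquivPi (p := fun k (g : Fin (α k) → V) => a k = Submodule.span F (Set.range g))
  let EC : (∀ k, {g : Fin (α k) → V // a k = Submodule.span F (Set.range g)}) ≃
      ∀ k, {f : Fin (α k) → (a k) // LinearIndependent F f} :=
    Equiv.piCongrRight (fun k => E4 (a k) (hα k).symm)
  rw [Nat.card_congr ((EA.trans EB).trans EC), Nat.card_pi]
  refine Finset.prod_congr rfl fun k _ => ?_
  have hk : α k ≤ Module.finrank F (a k) := le_of_eq (hα k)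
  rw [card_linearIndependent hk, ← hα k]
  rw [Fin.prod_univ_eq_prod_range (fun i => Fintype.card F ^ (α k) - Fintype.card F ^ i)]

end MK5

namespace MK6
open Finset Submodule MK4 MK5

variable {F V : Type*} [Field F] [Fintype F] [AddCommGroup V] [Module F V]

lemma spanmono [Fintype V] {p n : ℕ} (b : Fin n → V) (t : ℕ) (htp : t < p)
    (β β' : Fin p → ℕ) (hs : ∑ j, β j = n) (hs' : ∑ j, β' j = n)
    (hofs : ofs β t = ofs β' t) (hle : β ⟨t, htp⟩ ≤ β' ⟨t, htp⟩) :
    Submodule.span F (Set.range (fun j : Fin (β ⟨t, htp⟩) => b (bemb β hs ⟨t, htp⟩ j))) ≤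
      Submodule.span F (Set.range (fun j : Fin (β' ⟨t, htp⟩) => b (bemb β' hs' ⟨t, htp⟩ j))) := by
  apply Submodule.span_mono
  rintro x ⟨j, rfl⟩
  refine ⟨⟨(j : ℕ), by omega⟩, ?_⟩
  apply congrArg b
  apply Fin.ext
  simp only [bemb]
  exact congrArg (· + (j : ℕ)) hofs.symm

lemma comp_unique [Fintype V] [FiniteDimensional F V] {p n : ℕ}
    {a a' : Fin p → Submodule F V} {α α' : Fin p → ℕ}
    (hα : ∀ k, α k = Module.finrank F (a k)) (hα' : ∀ k, α' k = Module.finrank F (a' k))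
    (hsum : ∑ k, α k = n) (hsum' : ∑ k, α' k = n)
    (hord : ∀ k : Fin p, (k : ℕ) + 1 < p → (a k ≤ a' k ∨ a' k ≤ a k) → a k = a' k)
    {b : Fin n → V} (hb : b ∈ Comp α hsum a) (hb' : b ∈ Comp α' hsum' a') :
    a = a' := by
  have hmem := mem_comp_iff.1 hb
  have hmem' := mem_comp_iff.1 hb'
  have main : ∀ t : ℕ, t ≤ p → ofs α t = ofs α' t ∧ ∀ k : Fin p, (k : ℕ) < t → a k = a' k := by
    intro t
    induction t with
    | zero => intro _; exact ⟨by simp [ofs], fun k hk => absurd hk (by omega)⟩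
    | succ t ih =>
      intro ht
      obtain ⟨hofs, hprev⟩ := ih (by omega)
      have htp : t < p := by omega
      have hak : a ⟨t, htp⟩ = a' ⟨t, htp⟩ := by
        by_cases hkp : t + 1 < p
        · apply hord ⟨t, htp⟩ hkp
          rcases le_total (α ⟨t, htp⟩) (α' ⟨t, htp⟩) with hle | hle
          · left
            rw [hmem ⟨t, htp⟩, hmem' ⟨t, htp⟩]
            exact spanmono b t htp α α' hsum hsum' hofs hle
          · right
            rw [hmem ⟨t, htp⟩, hmem' ⟨t, htp⟩]
            exact spanmono b t htp α' α hsum' hsum hofs.symm hle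
        · have htp1 : t + 1 = p := by omega
          have h1 : ofs α (t + 1) = ofs α t + α ⟨t, htp⟩ := ofs_succ α htp
          have h1' : ofs α' (t + 1) = ofs α' t + α' ⟨t, htp⟩ := ofs_succ α' htp
          have h2 : ofs α (t + 1) = n := by rw [htp1, ofs_total, hsum]
          have h2' : ofs α' (t + 1) = n := by rw [htp1, ofs_total, hsum']
          have hαeq : α ⟨t, htp⟩ = α' ⟨t, htp⟩ := by omega
          rw [hmem ⟨t, htp⟩, hmem' ⟨t, htp⟩]
          exact le_antisymm
            (spanmono b t htp α α' hsum hsum' hofs (le_of_eq hαeq))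
            (spanmono b t htp α' α hsum' hsum hofs.symm (le_of_eq hαeq.symm))
      have hαk : α ⟨t, htp⟩ = α' ⟨t, htp⟩ := by
        rw [hα, hα', hak]
      constructor
      · rw [ofs_succ α htp, ofs_succ α' htp, hofs, hαk]
      · intro k hk
        rcases Nat.lt_or_ge (k : ℕ) t with h | h
        · exact hprev k h
        · have : k = ⟨t, htp⟩ := Fin.ext (show (k : ℕ) = t by omega)
          rw [this]
          exact hak
  funext k
  exact (main p le_rfl).2 k k.isLt

open scoped Classical in
noncomputable def CompD [Fintype V] {p : ℕ} (n : ℕ) (a : Fin p → Submodule F V) :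
    Finset (Fin n → V) :=
  if h : ∑ k, Module.finrank F (a k) = n
  then Comp (fun k => Module.finrank F (a k)) h a else ∅

lemma compD_eq [Fintype V] {p n : ℕ} {a : Fin p → Submodule F V}
    (h : ∑ k, Module.finrank F (a k) = n) :
    CompD n a = Comp (fun k => Module.finrank F (a k)) h a := by
  classical
  rw [CompD, dif_pos h]

open scoped Classical in
lemma bn_card [Fintype V] [FiniteDimensional F V] {n : ℕ} (hn : Module.finrank F V = n) :
    (Finset.univ.filter (fun b : Fin n → V => LinearIndependent F b)).card
      = ∏ i ∈ range n, (Fintype.card F ^ n - Fintype.card F ^ i) := by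
  have e : {b : Fin n → V // b ∈ Finset.univ.filter (fun b : Fin n → V => LinearIndependent F b)}
      ≃ {b : Fin n → V // LinearIndependent F b} :=
    Equiv.subtypeEquivRight (fun b => by simp)
  rw [← Nat.card_eq_finsetCard, Nat.card_congr e]
  have hk : n ≤ Module.finrank F V := le_of_eq hn.symm
  rw [card_linearIndependent hk, hn]
  rw [Fin.prod_univ_eq_prod_range (fun i => Fintype.card F ^ n - Fintype.card F ^ i)]

open scoped Classical in
lemma disjsum [Fintype V] [FiniteDimensional F V] {p n : ℕ} (hn : Module.finrank F V = n)
    (S : Finset (Fin p → Submodule F V))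
    (hS : ∀ a ∈ S, (⨆ i, a i) = ⊤ ∧ ∑ i, Module.finrank F (a i) = n)
    (huniq : ∀ a ∈ S, ∀ a' ∈ S, ∀ k : Fin p, (k : ℕ) + 1 < p →
      (a k ≤ a' k ∨ a' k ≤ a k) → a k = a' k) :
    ∑ a ∈ S, (CompD n a).card
      ≤ ∏ i ∈ range n, (Fintype.card F ^ n - Fintype.card F ^ i) := by
  rw [← bn_card hn]
  have hdisj : ∀ a ∈ S, ∀ a' ∈ S, a ≠ a' → Disjoint (CompD n a) (CompD n a') := by
    intro a ha a' ha' hne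
    rw [Finset.disjoint_left]
    intro b hb hb'
    apply hne
    rw [compD_eq (hS a ha).2] at hb
    rw [compD_eq (hS a' ha').2] at hb'
    exact comp_unique (fun k => rfl) (fun k => rfl) (hS a ha).2 (hS a' ha').2
      (huniq a ha a' ha') hb hb'
  rw [← Finset.card_biUnion hdisj]
  apply Finset.card_le_card
  intro b hb
  rw [Finset.mem_biUnion] at hb
  obtain ⟨a, ha, hba⟩ := hb
  rw [compD_eq (hS a ha).2] at hba
  rw [Finset.mem_filter]
  exact ⟨Finset.mem_univ b, comp_li hn hba (hS a ha).1⟩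

lemma compD_card [Fintype V] [FiniteDimensional F V] {p n : ℕ} (hn : Module.finrank F V = n)
    (a : Fin p → Submodule F V) (h : ∑ k, Module.finrank F (a k) = n) :
    (CompD n a).card = ∏ k : Fin p, ∏ i ∈ range (Module.finrank F (a k)),
      (Fintype.card F ^ (Module.finrank F (a k)) - Fintype.card F ^ i) := by
  rw [compD_eq h]
  exact comp_card hn a _ (fun k => rfl) h

end MK6

end MeshalkinAux

/-- Beck–Zaslavsky Meshalkin theorem for projective geometries, counting form: under the
hypotheses above, `|M|` is at most the sum of the `l^(p-1)` largest quantities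
`[n; α]_q · q^(s_2(α))` over nonnegative integer sequences `α` summing to `n`. -/
theorem meshalkin_projective_bound (q n l p : ℕ) (hl : 1 ≤ l) (hp : 2 ≤ p)
    (F : Type*) [Field F] [Fintype F] (hq : Fintype.card F = q)
    (V : Type*) [AddCommGroup V] [Module F V] [FiniteDimensional F V]
    (hn : Module.finrank F V = n)
    (M : Finset (Fin p → Submodule F V))
    (hmesh : ∀ a ∈ M, (⨆ i, a i) = ⊤ ∧ ∑ i, Module.finrank F (a i) = n)
    (hcf : ∀ k : Fin p, (k : ℕ) + 1 < p →
      ChainFree l {b : Submodule F V | ∃ a ∈ M, a k = b}) :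
    ∃ T : Finset (Fin p → ℕ), (∀ α ∈ T, ∑ i, α i = n) ∧ T.card ≤ l ^ (p - 1) ∧
      (M.card : ℚ) ≤ ∑ α ∈ T, gaussMultinomial q n α * (q : ℚ) ^ (s2 α) := by
  
  classical
  subst hq
  set q := Fintype.card F with hq
  have hq2 : 2 ≤ q := Fintype.one_lt_card
  haveI : Finite V := Module.finite_of_finite F
  letI : Fintype V := Fintype.ofFinite V
  haveI : Finite (Submodule F V) :=
    Finite.of_injective (fun (W : Submodule F V) => (W : Set V)) SetLike.coe_injective
  set L := l ^ (p - 1) with hL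
  -- all compositions
  set compsAll : Finset (Fin p → ℕ) :=
    ((Finset.univ : Finset (Fin p → Fin (n + 1))).image (fun f k => (f k : ℕ))).filter
      (fun α => ∑ k, α k = n) with hcompsAll
  have hmemAll : ∀ β : Fin p → ℕ, (∑ k, β k = n) → β ∈ compsAll := by
    intro β hβ
    rw [hcompsAll, Finset.mem_filter]
    refine ⟨Finset.mem_image.2 ⟨fun k => ⟨β k, ?_⟩, Finset.mem_univ _, rfl⟩, hβ⟩
    have h1 : β k ≤ ∑ j, β j := Finset.single_le_sum (fun j _ => Nat.zero_le _) (Finset.mem_univ k)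
    omega
  have hsumAll : ∀ β ∈ compsAll, ∑ k, β k = n := by
    intro β hβ
    rw [hcompsAll, Finset.mem_filter] at hβ
    exact hβ.2
  -- key quantities
  set cQ : (Fin p → ℕ) → ℚ := fun α => gaussMultinomial q n α * (q : ℚ) ^ (s2 α) with hcQ
  set P : (Fin p → ℕ) → ℕ := fun α => ∏ k, ∏ i ∈ range (α k), (q ^ (α k) - q ^ i) with hP
  set Bn : ℕ := ∏ i ∈ range n, (q ^ n - q ^ i) with hBn
  have hkey : ∀ α : Fin p → ℕ, (∑ k, α k = n) → (P α : ℚ) * cQ α = (Bn : ℚ) := by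
    intro α hα
    exact MK2.key_identity q n hq2 α hα
  have hPpos : ∀ α : Fin p → ℕ, 0 < P α :=
    fun α => Finset.prod_pos (fun k _ => MK2.inner_pos q (α k) hq2)
  have hBnpos : 0 < Bn := MK2.inner_pos q n hq2
  have hPposQ : ∀ α : Fin p → ℕ, (0 : ℚ) < (P α : ℚ) := fun α => by exact_mod_cast hPpos α
  have hBnposQ : (0 : ℚ) < (Bn : ℚ) := by exact_mod_cast hBnpos
  have hcpos : ∀ α : Fin p → ℕ, (∑ k, α k = n) → 0 < cQ α := by
    intro α hα
    have hk := hkey α hα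
    by_contra h
    push_neg at h
    have h2 : (P α : ℚ) * cQ α ≤ 0 := mul_nonpos_of_nonneg_of_nonpos (hPposQ α).le h
    rw [hk] at h2
    linarith
  have hinv : ∀ α : Fin p → ℕ, (∑ k, α k = n) → 1 / cQ α = (P α : ℚ) / (Bn : ℚ) := by
    intro α hα
    have hk := hkey α hα
    have hc := hcpos α hα
    field_simp
    linarith [hk]
  -- dimension vector
  set dv : (Fin p → Submodule F V) → (Fin p → ℕ) := fun a k => Module.finrank F (a k) with hdv
  -- heights and colors
  set hts : Fin p → Submodule F V → ℕ :=
    fun k W => MK3.ht {b : Submodule F V | ∃ a ∈ M, a k = b} W with hhts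
  set color : (Fin p → Submodule F V) → (Fin p → ℕ) :=
    fun a k => if (k : ℕ) + 1 < p then hts k (a k) else 0 with hcolor
  -- (1) number of colors
  have hcolorlt : ∀ a ∈ M, ∀ k : Fin p, (k : ℕ) + 1 < p → color a k < l := by
    intro a ha k hk
    rw [hcolor]
    simp only [hk, if_pos]
    exact MK3.ht_lt (hcf k hk) ⟨a, ha, rfl⟩
  have hcolorcard : (M.image color).card ≤ L := by
    have e : {k : Fin p // (k : ℕ) + 1 < p} ≃ Fin (p - 1) :=
      ⟨fun k => ⟨(k.1 : ℕ), by have := k.2; omega⟩,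
       fun j => ⟨⟨(j : ℕ), by have := j.isLt; omega⟩, by have := j.isLt; simpa using (by omega : (j : ℕ) + 1 < p)⟩,
       fun k => Subtype.ext (Fin.ext rfl), fun j => Fin.ext rfl⟩
    have hcard : Fintype.card ({k : Fin p // (k : ℕ) + 1 < p} → Fin l) = L := by
      rw [Fintype.card_fun, Fintype.card_fin, Fintype.card_congr e, Fintype.card_fin, hL]
    calc (M.image color).card
        ≤ (Finset.univ : Finset ({k : Fin p // (k : ℕ) + 1 < p} → Fin l)).card := by
          apply Finset.card_le_card_of_injOn
            (fun f (k : {k : Fin p // (k : ℕ) + 1 < p}) => (⟨min (f k.1) (l - 1), by omega⟩ : Fin l))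
          · intro f _
            exact Finset.mem_univ _
          · intro f hf f' hf' hff
            obtain ⟨a, ha, rfl⟩ := Finset.mem_image.1 hf
            obtain ⟨a', ha', rfl⟩ := Finset.mem_image.1 hf'
            funext k
            by_cases hk : (k : ℕ) + 1 < p
            · have h1 := hcolorlt a ha k hk
              have h2 := hcolorlt a' ha' k hk
              have h3 := congrFun hff ⟨k, hk⟩
              simp only [Fin.mk.injEq] at h3
              omega
            · rw [hcolor]
              simp [hk]
      _ = L := by rw [Finset.card_univ, hcard]
  -- (2) fibers
  set u := M.image dv with hu
  have husub : u ⊆ compsAll := by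
    intro β hβ
    obtain ⟨a, ha, rfl⟩ := Finset.mem_image.1 hβ
    exact hmemAll _ (hmesh a ha).2
  have hMcard : M.card = ∑ β ∈ u, (M.filter (fun a => dv a = β)).card :=
    Finset.card_eq_sum_card_fiberwise (fun a ha => Finset.mem_image_of_mem dv ha)
  -- per-a count
  have hcompcard : ∀ a ∈ M, (MK6.CompD n a).card = P (dv a) := by
    intro a ha
    rw [MK6.compD_card hn a (hmesh a ha).2]
  -- (3) class bound : nn ≤ cQ
  have hclassbound : ∀ β ∈ u, ((M.filter (fun a => dv a = β)).card : ℚ) ≤ cQ β := by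
    intro β hβ
    have hβsum : ∑ k, β k = n := hsumAll β (husub hβ)
    have hsub : M.filter (fun a => dv a = β) ⊆ M := Finset.filter_subset _ _
    have hds : ∑ a ∈ M.filter (fun a => dv a = β), (MK6.CompD n a).card ≤ Bn := by
      apply MK6.disjsum hn
      · intro a ha
        exact hmesh a (hsub ha)
      · intro a ha a' ha' k _ hcomp
        have hda : dv a = β := (Finset.mem_filter.1 ha).2
        have hda' : dv a' = β := (Finset.mem_filter.1 ha').2
        have hfr : Module.finrank F (a k) = Module.finrank F (a' k) := by
          have h1 : Module.finrank F (a k) = β k := congrFun hda k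
          have h2 : Module.finrank F (a' k) = β k := congrFun hda' k
          rw [h1, h2]
        rcases hcomp with h | h
        · exact Submodule.eq_of_le_of_finrank_eq h hfr
        · exact (Submodule.eq_of_le_of_finrank_eq h hfr.symm).symm
    have hsum2 : ∑ a ∈ M.filter (fun a => dv a = β), (MK6.CompD n a).card
        = (M.filter (fun a => dv a = β)).card * P β := by
      rw [Finset.sum_congr rfl (fun a ha => by
        rw [hcompcard a (hsub ha), (Finset.mem_filter.1 ha).2])]
      rw [Finset.sum_const, smul_eq_mul]
    rw [hsum2] at hds
    have hdsQ : ((M.filter (fun a => dv a = β)).card : ℚ) * (P β : ℚ) ≤ (Bn : ℚ) := by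
      exact_mod_cast hds
    have hc := hcpos β hβsum
    have hk := hkey β hβsum
    calc ((M.filter (fun a => dv a = β)).card : ℚ)
        = ((M.filter (fun a => dv a = β)).card : ℚ) * (P β : ℚ) / (P β : ℚ) := by
          rw [mul_div_assoc, div_self (hPposQ β).ne', mul_one]
      _ ≤ (Bn : ℚ) / (P β : ℚ) := by
          apply div_le_div_of_nonneg_right hdsQ (hPposQ β).le
      _ = cQ β := by
          rw [← hk, mul_comm, mul_div_assoc, div_self (hPposQ β).ne', mul_one]
  -- (4) LYM
  have hlym : ∑ β ∈ u, ((M.filter (fun a => dv a = β)).card : ℚ) / cQ β ≤ (L : ℚ) := by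
    have step1 : ∑ β ∈ u, ((M.filter (fun a => dv a = β)).card : ℚ) / cQ β
        = ∑ a ∈ M, 1 / cQ (dv a) := by
      rw [← Finset.sum_fiberwise_of_maps_to (fun a ha => Finset.mem_image_of_mem dv ha)
        (fun a => 1 / cQ (dv a))]
      apply Finset.sum_congr rfl
      intro β hβ
      rw [Finset.sum_congr rfl (fun a ha => by rw [(Finset.mem_filter.1 ha).2]),
        Finset.sum_const, nsmul_eq_mul]
      ring
    have step2 : ∑ a ∈ M, 1 / cQ (dv a)
        = ∑ χ ∈ M.image color, ∑ a ∈ M.filter (fun a => color a = χ), 1 / cQ (dv a) := by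
      rw [Finset.sum_fiberwise_of_maps_to (fun a ha => Finset.mem_image_of_mem color ha)]
    have step3 : ∀ χ ∈ M.image color, ∑ a ∈ M.filter (fun a => color a = χ), 1 / cQ (dv a) ≤ 1 := by
      intro χ hχ
      have hsub : M.filter (fun a => color a = χ) ⊆ M := Finset.filter_subset _ _
      have hds : ∑ a ∈ M.filter (fun a => color a = χ), (MK6.CompD n a).card ≤ Bn := by
        apply MK6.disjsum hn
        · intro a ha
          exact hmesh a (hsub ha)
        · intro a ha a' ha' k hk hcomp
          have hca : color a = χ := (Finset.mem_filter.1 ha).2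
          have hca' : color a' = χ := (Finset.mem_filter.1 ha').2
          have hht : hts k (a k) = hts k (a' k) := by
            have h1 : (if (k : ℕ) + 1 < p then hts k (a k) else 0) = χ k := congrFun hca k
            have h2 : (if (k : ℕ) + 1 < p then hts k (a' k) else 0) = χ k := congrFun hca' k
            rw [if_pos hk] at h1 h2
            rw [h1, h2]
          by_contra hne
          have hmema : a k ∈ {b : Submodule F V | ∃ a ∈ M, a k = b} := ⟨a, hsub ha, rfl⟩
          have hmema' : a' k ∈ {b : Submodule F V | ∃ a ∈ M, a k = b} := ⟨a', hsub ha', rfl⟩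
          rcases hcomp with h | h
          · exact absurd hht (ne_of_lt (MK3.ht_strictmono hmema hmema' (lt_of_le_of_ne h hne)))
          · exact absurd hht (ne_of_gt (MK3.ht_strictmono hmema' hmema (lt_of_le_of_ne h (Ne.symm hne))))
      have heq : ∑ a ∈ M.filter (fun a => color a = χ), 1 / cQ (dv a)
          = (∑ a ∈ M.filter (fun a => color a = χ), (P (dv a) : ℚ)) / (Bn : ℚ) := by
        rw [Finset.sum_div]
        apply Finset.sum_congr rfl
        intro a ha
        rw [hinv (dv a) (hmesh a (hsub ha)).2]
      rw [heq]
      rw [div_le_one hBnposQ]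
      have : (∑ a ∈ M.filter (fun a => color a = χ), (P (dv a) : ℚ))
          = ((∑ a ∈ M.filter (fun a => color a = χ), P (dv a) : ℕ) : ℚ) := by
        push_cast
        rfl
      rw [this]
      have hds2 : ∑ a ∈ M.filter (fun a => color a = χ), P (dv a) ≤ Bn := by
        calc ∑ a ∈ M.filter (fun a => color a = χ), P (dv a)
            = ∑ a ∈ M.filter (fun a => color a = χ), (MK6.CompD n a).card :=
              (Finset.sum_congr rfl (fun a ha => (hcompcard a (hsub ha)).symm))
          _ ≤ Bn := hds
      exact_mod_cast hds2
    calc ∑ β ∈ u, ((M.filter (fun a => dv a = β)).card : ℚ) / cQ β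
        = ∑ χ ∈ M.image color, ∑ a ∈ M.filter (fun a => color a = χ), 1 / cQ (dv a) := by
          rw [step1, step2]
      _ ≤ ∑ _χ ∈ M.image color, (1 : ℚ) := Finset.sum_le_sum step3
      _ = ((M.image color).card : ℚ) := by rw [Finset.sum_const, nsmul_eq_mul, mul_one]
      _ ≤ (L : ℚ) := by exact_mod_cast hcolorcard
  -- (5) conclusion
  obtain ⟨T, hTsub, hTcard, hTmax⟩ := MK2.exists_top cQ L compsAll
  refine ⟨T, ?_, ?_, ?_⟩
  · intro α hα
    exact hsumAll α (hTsub hα)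
  · rw [hTcard]
    exact min_le_left _ _
  · have hfinal : ∑ β ∈ u, ((M.filter (fun a => dv a = β)).card : ℚ) ≤ ∑ α ∈ T, cQ α := by
      apply MK2.bound_lemma compsAll u T cQ _ L husub hTsub
        (fun α hα => hcpos α (hsumAll α hα))
        (fun β _ => by positivity)
        hclassbound hTcard hTmax hlym
    calc (M.card : ℚ)
        = ∑ β ∈ u, ((M.filter (fun a => dv a = β)).card : ℚ) := by
          rw [hMcard]
          push_cast
          rfl
      _ ≤ ∑ α ∈ T, cQ α := hfinal
end
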